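/- arXiv:1705.04109 — 8 statements merged into one kernel-verified Lean document; each statement's English description precedes it below -/
import Mathlib

section
/- For every natural number n, the number of permutations of length n avoiding the pattern 231 equals the n-th Catalan number. -/
/-!
Split a 231-avoiding permutation of length `n + 1` at its maximum: `π = α n β` with `α` of length
`m`. An entry of `α` above an entry of `β` would form a 231 with `n`, so `α` is a permutation of
`{0, …, m - 1}` and `β` one of `{m, …, n - 1}`, both 231-avoiding. Conversely every such gluing
avoids 231, since an occurrence cannot straddle `n`. This is the Catalan recurrence
`C (n + 1) = ∑ C m * C (n - m)`.
-/

/-- A permutation `π` of length `n` contains the pattern `p` (a length-`k`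
sequence of distinct values, given by its values) if there is a strictly
increasing choice of `k` indices on which `π` is order isomorphic to `p`. -/
def PermContains {n k : ℕ} (π : Equiv.Perm (Fin n)) (p : Fin k → ℕ) : Prop :=
  ∃ f : Fin k → Fin n, StrictMono f ∧ ∀ a b : Fin k, p a < p b ↔ π (f a) < π (f b)

/-- `π` avoids the pattern `p`. -/
def PermAvoids {n k : ℕ} (π : Equiv.Perm (Fin n)) (p : Fin k → ℕ) : Prop :=
  ¬ PermContains π p

open Equiv

lemma permContains_231_iff {n : ℕ} (π : Perm (Fin n)) :
    PermContains π ![2, 3, 1] ↔ ∃ i j k, i < j ∧ j < k ∧ π k < π i ∧ π i < π j := by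
  constructor
  · rintro ⟨f, hf, hp⟩
    exact ⟨f 0, f 1, f 2, hf (by decide), hf (by decide), (hp 2 0).mp (by decide),
      (hp 0 1).mp (by decide)⟩
  · rintro ⟨i, j, k, hij, hjk, hki, hij'⟩
    refine ⟨![i, j, k], Fin.strictMono_iff_lt_succ.mpr ?_, ?_⟩
    · simp [Fin.forall_fin_two, hij, hjk]
    · have hkj := hki.trans hij'
      simp only [Fin.lt_def] at *
      intro a b
      fin_cases a <;> fin_cases b <;> simp <;> omega

lemma PermContains.trans {n m k : ℕ} {π : Perm (Fin n)} {σ : Perm (Fin m)} {p : Fin k → ℕ}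
    (hπσ : PermContains π fun i => (σ i : ℕ)) (hσp : PermContains σ p) : PermContains π p := by
  obtain ⟨f, hf, hfσ⟩ := hπσ
  obtain ⟨g, hg, hgp⟩ := hσp
  exact ⟨f ∘ g, hf.comp hg, fun a b => (hgp a b).trans (hfσ (g a) (g b))⟩

section Glue

variable {n : ℕ} (m : Fin (n + 1)) (σ : Perm (Fin m)) (τ : Perm (Fin (n - m)))

/-- In one-line notation, `σ`, then `n` at position `m`, then `τ` shifted up by `m`. -/
def glueFun (i : Fin (n + 1)) : Fin (n + 1) :=
  if h : i < m then ⟨σ ⟨i, h⟩, by have := (σ ⟨i, h⟩).isLt; omega⟩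
  else if h' : i = m then Fin.last n
  else ⟨m + τ ⟨i - (m + 1), by omega⟩, by have := (τ ⟨i - (m + 1), by omega⟩).isLt; omega⟩

variable {m σ τ}

lemma glueFun_of_lt {i : Fin (n + 1)} (h : i < m) : (glueFun m σ τ i : ℕ) = σ ⟨i, h⟩ := by
  rw [glueFun, dif_pos h]

lemma glueFun_self : glueFun m σ τ m = Fin.last n := by
  rw [glueFun, dif_neg (lt_irrefl m), dif_pos rfl]

lemma glueFun_of_gt {i : Fin (n + 1)} (h : m < i) :
    (glueFun m σ τ i : ℕ) = m + τ ⟨i - (m + 1), by omega⟩ := by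
  rw [glueFun, dif_neg h.not_gt, dif_neg h.ne']

lemma glueFun_lt_of_lt {i : Fin (n + 1)} (h : i < m) : (glueFun m σ τ i : ℕ) < m := by
  rw [glueFun_of_lt h]; exact (σ _).isLt

lemma glueFun_mem_of_gt {i : Fin (n + 1)} (h : m < i) :
    (m : ℕ) ≤ glueFun m σ τ i ∧ (glueFun m σ τ i : ℕ) < n := by
  have := (τ ⟨i - (m + 1), by omega⟩).isLt
  rw [glueFun_of_gt h]; omega

variable (m σ τ)

lemma glueFun_injective : Function.Injective (glueFun m σ τ) := by
  have region : ∀ x, x < m ∧ (glueFun m σ τ x : ℕ) < m ∨ x = m ∧ (glueFun m σ τ x : ℕ) = n ∨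
      m < x ∧ (m : ℕ) ≤ glueFun m σ τ x ∧ (glueFun m σ τ x : ℕ) < n := by
    intro x
    rcases lt_trichotomy x m with hx | rfl | hx
    · exact .inl ⟨hx, glueFun_lt_of_lt hx⟩
    · exact .inr (.inl ⟨rfl, by rw [glueFun_self, Fin.val_last]⟩)
    · exact .inr (.inr ⟨hx, glueFun_mem_of_gt hx⟩)
  intro i j hij
  have hval := congrArg Fin.val hij
  rcases region i with ⟨hi, hi'⟩ | ⟨hi, hi'⟩ | ⟨hi, hi'⟩ <;>
    rcases region j with ⟨hj, hj'⟩ | ⟨hj, hj'⟩ | ⟨hj, hj'⟩ <;> try omega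
  · rw [glueFun_of_lt hi, glueFun_of_lt hj] at hval
    simpa [Fin.ext_iff] using σ.injective (Fin.ext hval)
  · rw [glueFun_of_gt hi, glueFun_of_gt hj] at hval
    have := congrArg Fin.val (τ.injective (Fin.ext (Nat.add_left_cancel hval)))
    simp only at this
    omega

noncomputable def glue : Perm (Fin (n + 1)) :=
  Equiv.ofBijective (glueFun m σ τ) (Finite.injective_iff_bijective.mp (glueFun_injective m σ τ))

variable {m σ τ}

lemma glue_apply_of_lt {i : Fin (n + 1)} (h : i < m) : (glue m σ τ i : ℕ) = σ ⟨i, h⟩ :=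
  glueFun_of_lt h

lemma glue_apply_self : glue m σ τ m = Fin.last n :=
  glueFun_self

lemma glue_apply_of_gt {i : Fin (n + 1)} (h : m < i) :
    (glue m σ τ i : ℕ) = m + τ ⟨i - (m + 1), by omega⟩ :=
  glueFun_of_gt h

lemma glue_apply_left (x : Fin m) : (glue m σ τ (Fin.castLE m.isLt.le x) : ℕ) = σ x :=
  glue_apply_of_lt x.isLt

lemma glue_apply_right (x : Fin (n - m)) :
    (glue m σ τ ⟨m + 1 + x, by omega⟩ : ℕ) = m + τ x := by
  rw [glue_apply_of_gt (by simp [Fin.lt_def]; omega)]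
  simp

variable (m σ τ)

lemma glue_symm_last : (glue m σ τ).symm (Fin.last n) = m := by
  rw [Equiv.symm_apply_eq, glue_apply_self]

lemma glue_injective {σ' : Perm (Fin m)} {τ' : Perm (Fin (n - m))}
    (h : glue m σ τ = glue m σ' τ') : σ = σ' ∧ τ = τ' := by
  constructor
  · ext x
    rw [← glue_apply_left (τ := τ), ← glue_apply_left (τ := τ'), h]
  · ext x
    have := glue_apply_right (σ := σ) (τ := τ) x
    rw [h, glue_apply_right] at this
    omega

lemma permContains_glue_left : PermContains (glue m σ τ) fun x => (σ x : ℕ) :=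
  ⟨Fin.castLE m.isLt.le, Fin.strictMono_castLE _, fun a b => by
    rw [Fin.lt_def, glue_apply_left, glue_apply_left]⟩

lemma permContains_glue_right : PermContains (glue m σ τ) fun x => (τ x : ℕ) := by
  refine ⟨fun x => ⟨m + 1 + x, by omega⟩, fun x y h => ?_, fun a b => ?_⟩
  · simp only [Fin.lt_def] at h ⊢; omega
  · dsimp only
    rw [Fin.lt_def, glue_apply_right, glue_apply_right]
    omega

lemma permContains_of_glue (h : PermContains (glue m σ τ) ![2, 3, 1]) :
    PermContains σ ![2, 3, 1] ∨ PermContains τ ![2, 3, 1] := by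
  obtain ⟨i, j, k, hij, hjk, hki, hij'⟩ := (permContains_231_iff _).mp h
  rw [Fin.lt_def] at hki hij'
  have hlast (x : Fin (n + 1)) : (glue m σ τ x : ℕ) ≤ n :=
    Nat.lt_succ_iff.mp (glue m σ τ x).isLt
  rcases lt_trichotomy k m with hk | hk | hk
  · have hj := hjk.trans hk
    have hi := hij.trans hj
    rw [glue_apply_of_lt hi, glue_apply_of_lt hj, glue_apply_of_lt hk] at *
    exact .inl ((permContains_231_iff σ).mpr ⟨⟨i, hi⟩, ⟨j, hj⟩, ⟨k, hk⟩, hij, hjk, hki, hij'⟩)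
  · have := hlast i
    rw [hk, glue_apply_self, Fin.val_last] at hki
    omega
  · have hi : m < i := by
      rcases lt_trichotomy i m with hi | hi | hi
      · have := (τ ⟨k - (m + 1), by omega⟩).isLt
        have := (σ ⟨i, hi⟩).isLt
        rw [glue_apply_of_lt hi, glue_apply_of_gt hk] at hki
        omega
      · have := hlast j
        rw [hi, glue_apply_self, Fin.val_last] at hij'
        omega
      · exact hi
    have hj := hi.trans hij
    rw [glue_apply_of_gt hi, glue_apply_of_gt hj, glue_apply_of_gt hk] at *
    refine .inr ((permContains_231_iff τ).mpr ⟨⟨i - (m + 1), by omega⟩, ⟨j - (m + 1), by omega⟩,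
      ⟨k - (m + 1), by omega⟩, ?_, ?_, ?_, ?_⟩) <;> simp only [Fin.lt_def] <;> omega

lemma glue_avoids_iff :
    PermAvoids (glue m σ τ) ![2, 3, 1] ↔ PermAvoids σ ![2, 3, 1] ∧ PermAvoids τ ![2, 3, 1] := by
  simp only [PermAvoids, ← not_or]
  exact not_congr ⟨permContains_of_glue m σ τ, fun h => h.elim
    (permContains_glue_left m σ τ).trans (permContains_glue_right m σ τ).trans⟩

end Glue

lemma Equiv.Perm.exists_restrict_block {N L : ℕ} (π : Perm (Fin N)) (a b : ℕ) (hL : a + L ≤ N)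
    (h : ∀ x : Fin L, b ≤ (π ⟨a + x, by omega⟩ : ℕ) ∧ (π ⟨a + x, by omega⟩ : ℕ) < b + L) :
    ∃ τ : Perm (Fin L), ∀ x : Fin L, (π ⟨a + x, by omega⟩ : ℕ) = b + τ x := by
  let f (x : Fin L) : Fin L := ⟨π ⟨a + x, by omega⟩ - b, by have := h x; omega⟩
  have hf : f.Injective := fun x y hxy => by
    have := h x
    have := h y
    have hπ := π.injective (Fin.ext (by simp only [f, Fin.ext_iff] at hxy; omega) :
      π ⟨a + x, by omega⟩ = π ⟨a + y, by omega⟩)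
    simpa [Fin.ext_iff] using hπ
  refine ⟨Equiv.ofBijective f (Finite.injective_iff_bijective.mp hf), fun x => ?_⟩
  have := h x
  simp only [Equiv.ofBijective_apply, f]
  omega

section Decompose

variable {n : ℕ} {π : Perm (Fin (n + 1))}

lemma apply_lt_last_of_ne_symm_last {k : Fin (n + 1)} (hk : k ≠ π.symm (Fin.last n)) :
    π k < Fin.last n :=
  Fin.lt_last_iff_ne_last.mpr fun h => hk (π.eq_symm_apply.mpr h)

lemma apply_lt_apply_of_lt_symm_last_lt (hπ : PermAvoids π ![2, 3, 1]) {i k : Fin (n + 1)}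
    (hi : i < π.symm (Fin.last n)) (hk : π.symm (Fin.last n) < k) : π i < π k := by
  by_contra! h
  refine hπ ((permContains_231_iff π).mpr ⟨i, _, k, hi, hk,
    lt_of_le_of_ne h (π.injective.ne (hi.trans hk).ne'), ?_⟩)
  rw [Equiv.apply_symm_apply]
  exact apply_lt_last_of_ne_symm_last hi.ne

lemma apply_lt_symm_last_of_lt (hπ : PermAvoids π ![2, 3, 1]) {i : Fin (n + 1)}
    (hi : i < π.symm (Fin.last n)) : (π i : ℕ) < π.symm (Fin.last n) := by
  -- the `n - m` entries right of the maximum lie strictly between `π i` and `n`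
  have hmaps : Set.MapsTo π (Finset.Ioi (π.symm (Fin.last n))) (Finset.Ioo (π i) (Fin.last n)) :=
    fun k hk => by
      simp only [Finset.coe_Ioi, Finset.coe_Ioo, Set.mem_Ioi, Set.mem_Ioo] at hk ⊢
      exact ⟨apply_lt_apply_of_lt_symm_last_lt hπ hi hk, apply_lt_last_of_ne_symm_last hk.ne'⟩
  have hcard := Finset.card_le_card_of_injOn π hmaps π.injective.injOn
  have hlast := apply_lt_last_of_ne_symm_last hi.ne
  rw [Fin.card_Ioi, Fin.card_Ioo, Fin.val_last] at hcard
  rw [Fin.lt_def, Fin.val_last] at hlast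
  omega

lemma symm_last_le_apply_of_gt (hπ : PermAvoids π ![2, 3, 1]) {k : Fin (n + 1)}
    (hk : π.symm (Fin.last n) < k) : (π.symm (Fin.last n) : ℕ) ≤ π k := by
  -- the `m` entries left of the maximum lie below `π k`
  have hmaps : Set.MapsTo π (Finset.Iio (π.symm (Fin.last n))) (Finset.Iio (π k)) :=
    fun i hi => by
      simp only [Finset.coe_Iio, Set.mem_Iio] at hi ⊢
      exact apply_lt_apply_of_lt_symm_last_lt hπ hi hk
  simpa only [Fin.card_Iio] using Finset.card_le_card_of_injOn π hmaps π.injective.injOn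

lemma exists_glue_eq (hπ : PermAvoids π ![2, 3, 1]) :
    ∃ σ τ, glue (π.symm (Fin.last n)) σ τ = π := by
  set m := π.symm (Fin.last n) with hm
  have hright (x : Fin (n - m)) : m < (⟨m + 1 + x, by omega⟩ : Fin (n + 1)) := by
    show (m : ℕ) < m + 1 + x
    omega
  obtain ⟨σ, hσ⟩ := π.exists_restrict_block 0 0 (L := m) (by omega) fun x => by
    simpa using apply_lt_symm_last_of_lt hπ (i := ⟨x, by omega⟩) x.isLt
  obtain ⟨τ, hτ⟩ := π.exists_restrict_block (m + 1) m (L := n - m) (by omega) fun x => by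
    have := apply_lt_last_of_ne_symm_last (hright x).ne'
    rw [Fin.lt_def, Fin.val_last] at this
    exact ⟨symm_last_le_apply_of_gt hπ (hright x), by omega⟩
  refine ⟨σ, τ, Equiv.ext fun i => Fin.ext ?_⟩
  rcases lt_trichotomy i m with hi | hi | hi
  · simpa [glue_apply_of_lt hi] using (hσ ⟨i, hi⟩).symm
  · rw [hi, glue_apply_self, hm, π.apply_symm_apply]
  · rw [glue_apply_of_gt hi, ← hτ]
    congr 2
    ext
    dsimp only
    omega

end Decompose

abbrev Av231 (n : ℕ) := {π : Perm (Fin n) // PermAvoids π ![2, 3, 1]}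

noncomputable def glueAv231 (n : ℕ) :
    (Σ m : Fin (n + 1), Av231 m × Av231 (n - m)) → Av231 (n + 1) :=
  fun x => ⟨glue x.1 x.2.1 x.2.2, (glue_avoids_iff _ _ _).mpr ⟨x.2.1.2, x.2.2.2⟩⟩

lemma glueAv231_bijective (n : ℕ) : (glueAv231 n).Bijective := by
  constructor
  · rintro ⟨m, σ, τ⟩ ⟨m', σ', τ'⟩ h
    have h := congrArg Subtype.val h
    obtain rfl : m = m' := by
      rw [← glue_symm_last m σ.1 τ.1, ← glue_symm_last m' σ'.1 τ'.1]
      exact congrArg (fun π : Perm _ => π.symm (Fin.last n)) h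
    obtain ⟨hσ, hτ⟩ := glue_injective m σ.1 τ.1 h
    rw [Subtype.ext hσ, Subtype.ext hτ]
  · rintro ⟨π, hπ⟩
    obtain ⟨σ, τ, h⟩ := exists_glue_eq hπ
    obtain ⟨hσ, hτ⟩ := (glue_avoids_iff _ σ τ).mp (by rw [h]; exact hπ)
    exact ⟨⟨_, ⟨σ, hσ⟩, ⟨τ, hτ⟩⟩, Subtype.ext h⟩

lemma card_av231_zero : Nat.card (Av231 0) = 1 := by
  have : Unique (Av231 0) := ⟨⟨⟨1, fun ⟨f, _⟩ => (f 0).elim0⟩⟩,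
    fun π => Subtype.ext (Subsingleton.elim _ _)⟩
  exact Nat.card_unique

lemma card_av231_succ (n : ℕ) :
    Nat.card (Av231 (n + 1)) =
      ∑ m : Fin (n + 1), Nat.card (Av231 m) * Nat.card (Av231 (n - m)) := by
  rw [← Nat.card_congr (Equiv.ofBijective _ (glueAv231_bijective n)), Nat.card_sigma]
  simp only [Nat.card_prod]

theorem av231_card_eq_catalan (n : ℕ) :
    Nat.card {π : Equiv.Perm (Fin n) // PermAvoids π ![2, 3, 1]} = catalan n := by
  induction n using Nat.strong_induction_on with
  | _ n ih =>
    cases n with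
    | zero => exact card_av231_zero.trans catalan_zero.symm
    | succ n =>
      rw [card_av231_succ, catalan_succ]
      exact Finset.sum_congr rfl fun m _ => by rw [ih m (by omega), ih (n - m) (by omega)]
end

section
/- For every natural number n ≥ 1, the number of permutations of length n avoiding both patterns 123 and 231 equals (n² − n + 2)/2. -/
open Equiv

theorem Equiv.eq_of_forall_lt_imp_lt {α β : Type*} [LinearOrder β] [WellFoundedLT β]
    {e₁ e₂ : α ≃ β} (h : ∀ x y, e₁ x < e₁ y → e₂ x < e₂ y) : e₁ = e₂ := by
  have hmono : StrictMono (e₁.symm.trans e₂) := fun u v huv => by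
    simpa using h (e₁.symm u) (e₁.symm v) (by simpa using huv)
  have hid : ⇑(e₁.symm.trans e₂) = id :=
    (hmono.range_inj strictMono_id).mp (by simp)
  ext x
  simpa using (congrFun hid (e₁ x)).symm

section Patterns

variable {n : ℕ} (π : Perm (Fin n))

theorem permContains_123_iff :
    PermContains π ![1, 2, 3] ↔ ∃ a b c, a < b ∧ b < c ∧ π a < π b ∧ π b < π c := by
  constructor
  · rintro ⟨f, hf, hiso⟩
    exact ⟨f 0, f 1, f 2, hf (by decide), hf (by decide), (hiso 0 1).mp (by decide),
      (hiso 1 2).mp (by decide)⟩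
  · rintro ⟨a, b, c, hab, hbc, h₁, h₂⟩
    refine ⟨![a, b, c], Fin.strictMono_iff_lt_succ.mpr fun i => by fin_cases i <;> assumption, ?_⟩
    intro i j
    fin_cases i <;> fin_cases j <;>
      simp only [Fin.zero_eta, Fin.mk_one, Fin.reduceFinMk, Matrix.cons_val_zero, Matrix.cons_val_one,
        Matrix.cons_val] <;> omega

theorem permContains_231_iff_s1 :
    PermContains π ![2, 3, 1] ↔ ∃ a b c, a < b ∧ b < c ∧ π c < π a ∧ π a < π b := by
  constructor
  · rintro ⟨f, hf, hiso⟩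
    exact ⟨f 0, f 1, f 2, hf (by decide), hf (by decide), (hiso 2 0).mp (by decide),
      (hiso 0 1).mp (by decide)⟩
  · rintro ⟨a, b, c, hab, hbc, h₁, h₂⟩
    refine ⟨![a, b, c], Fin.strictMono_iff_lt_succ.mpr fun i => by fin_cases i <;> assumption, ?_⟩
    intro i j
    fin_cases i <;> fin_cases j <;>
      simp only [Fin.zero_eta, Fin.mk_one, Fin.reduceFinMk, Matrix.cons_val_zero, Matrix.cons_val_one,
        Matrix.cons_val] <;> omega

def AscentsBoundLater : Prop :=
  ∀ a b c, a < b → b < c → π a < π b → π a < π c ∧ π c < π b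

theorem permAvoids_123_and_231_iff :
    PermAvoids π ![1, 2, 3] ∧ PermAvoids π ![2, 3, 1] ↔ AscentsBoundLater π := by
  simp only [PermAvoids, permContains_123_iff, permContains_231_iff_s1, AscentsBoundLater]
  constructor
  · rintro ⟨h123, h231⟩ a b c hab hbc hlt
    have hca : π c ≠ π a := π.injective.ne (by omega)
    have hcb : π c ≠ π b := π.injective.ne (by omega)
    constructor
    · by_contra h
      exact h231 ⟨a, b, c, hab, hbc, by order, hlt⟩
    · by_contra h
      exact h123 ⟨a, b, c, hab, hbc, hlt, by order⟩
  · intro h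
    constructor
    · rintro ⟨a, b, c, hab, hbc, h₁, h₂⟩
      exact (h a b c hab hbc h₁).2.asymm h₂
    · rintro ⟨a, b, c, hab, hbc, h₁, h₂⟩
      exact (h a b c hab hbc h₂).1.asymm h₁

end Patterns

/-- For `q ≤ r ≤ n`: the positions `[0, q)` carry the `q` largest values, `[q, r)` the `r - q`
smallest ones and `[r, n)` the rest, each block in decreasing order. If `q = r` or `r = n` this is
the decreasing permutation. -/
def threeBlock (n q r p : ℕ) : ℕ :=
  if p < q then n - 1 - p else if p < r then r - 1 - p else n + r - q - 1 - p

section ThreeBlock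

variable {n q r : ℕ}

noncomputable def threeBlockPerm (hqr : q ≤ r) (hrn : r ≤ n) : Perm (Fin n) :=
  Equiv.ofBijective (fun p => ⟨threeBlock n q r p, by unfold threeBlock; split_ifs <;> omega⟩)
    (Finite.injective_iff_bijective.mp fun p p' h => by
      simp only [Fin.mk.injEq, threeBlock] at h
      split_ifs at h <;> omega)

theorem threeBlockPerm_apply (hqr : q ≤ r) (hrn : r ≤ n) (p : Fin n) :
    (threeBlockPerm hqr hrn p : ℕ) = threeBlock n q r p :=
  rfl

theorem ascentsBoundLater_threeBlockPerm (hqr : q ≤ r) (hrn : r ≤ n) :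
    AscentsBoundLater (threeBlockPerm hqr hrn) := by
  intro a b c hab hbc h
  simp only [Fin.lt_def, threeBlockPerm_apply] at h ⊢
  unfold threeBlock at h ⊢
  split_ifs at h ⊢ <;> omega

theorem eq_threeBlockPerm_of {π : Perm (Fin n)} (hqr : q ≤ r) (hrn : r ≤ n)
    (hpre : ∀ x y : Fin n, x < y → (y : ℕ) < r → π y < π x)
    (hsuf : ∀ x y : Fin n, r ≤ (x : ℕ) → x < y → π y < π x)
    (hlow : ∀ x y : Fin n, q ≤ (x : ℕ) → (x : ℕ) < r → r ≤ (y : ℕ) → π x < π y)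
    (hhigh : ∀ x y : Fin n, r ≤ (x : ℕ) → (y : ℕ) < q → π x < π y) :
    π = threeBlockPerm hqr hrn := by
  refine (Equiv.eq_of_forall_lt_imp_lt fun x y h => ?_).symm
  rw [Fin.lt_def, threeBlockPerm_apply, threeBlockPerm_apply] at h
  unfold threeBlock at h
  split_ifs at h <;>
    first
    | exact hpre _ _ (by omega) (by omega)
    | exact hsuf _ _ (by omega) (by omega)
    | exact hlow _ _ (by omega) (by omega) (by omega)
    | exact hhigh _ _ (by omega) (by omega)

theorem eq_of_threeBlockPerm_eq {q' r' : ℕ} (hqr : q < r) (hrn : r < n) (hqr' : q' ≤ r')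
    (hrn' : r' ≤ n) (h : threeBlockPerm hqr.le hrn.le = threeBlockPerm hqr' hrn') :
    q = q' ∧ r = r' := by
  -- `r - q` is the last value and `r - 1` the position of the value `0`.
  have hlast := congrArg (fun π : Perm (Fin n) => (π ⟨n - 1, by omega⟩ : ℕ)) h
  have hzero := congrArg (fun π : Perm (Fin n) => (π ⟨r - 1, by omega⟩ : ℕ)) h
  simp only [threeBlockPerm_apply, threeBlock] at hlast hzero
  split_ifs at hlast hzero <;> omega

end ThreeBlock

namespace AscentsBoundLater

variable {n : ℕ} {π : Perm (Fin n)}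

theorem strictAntiOn_Iic_of_forall_le (hπ : AscentsBoundLater π) {m : Fin n}
    (hm : ∀ x, π m ≤ π x) : StrictAntiOn π (Set.Iic m) := by
  intro a _ b hb hab
  by_contra h
  have hlt : π a < π b := (π.injective.ne hab.ne).lt_of_le (not_lt.mp h)
  rcases (Set.mem_Iic.mp hb).lt_or_eq with hbm | rfl
  · exact (hm a).not_gt (hπ a b m hab hbm hlt).1
  · exact (hm a).not_gt hlt

theorem strictAntiOn_Ioi_of_forall_le (hπ : AscentsBoundLater π) {m : Fin n}
    (hm : ∀ x, π m ≤ π x) : StrictAntiOn π (Set.Ioi m) :=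
  fun a ha _ _ hab => (hπ m a _ ha hab ((π.injective.ne (ne_of_lt ha)).lt_of_le (hm a))).2

theorem eq_threeBlockPerm (hπ : AscentsBoundLater π) :
    π = threeBlockPerm n.zero_le le_rfl ∨
      ∃ q r, ∃ (hqr : q < r) (hrn : r < n), π = threeBlockPerm hqr.le hrn.le := by
  by_cases hanti : StrictAnti π
  · left
    exact eq_threeBlockPerm_of _ _ (fun x y hxy _ => hanti hxy) (fun x _ h => by omega)
      (fun _ y _ _ h => by omega) (fun _ _ _ h => by omega)
  right
  obtain ⟨a, b, hab, hasc⟩ : ∃ a b, a < b ∧ π a < π b := by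
    simp only [StrictAnti, not_forall, not_lt] at hanti
    obtain ⟨a, b, hab, hle⟩ := hanti
    exact ⟨a, b, hab, (π.injective.ne hab.ne).lt_of_le hle⟩
  have : Nonempty (Fin n) := ⟨a⟩
  obtain ⟨m, hm⟩ := Finite.exists_min π
  have hpre := hπ.strictAntiOn_Iic_of_forall_le hm
  have hsuf := hπ.strictAntiOn_Ioi_of_forall_le hm
  simp only [StrictAntiOn, Set.mem_Iic, Set.mem_Ioi] at hpre hsuf
  have hmb : m < b := lt_of_not_ge fun hbm => (hpre (hab.le.trans hbm) hbm hab).not_gt hasc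
  -- The bottom block ends at `m` and starts at the first position `q` with a value below `π R`.
  set R : Fin n := ⟨m + 1, by omega⟩
  have hmR : m < R := Fin.lt_def.mpr (Nat.lt_succ_self m)
  obtain ⟨q, hq, hqmin⟩ := Finset.exists_min_image {x | π x < π R} id
    ⟨m, by simpa using (π.injective.ne hmR.ne).lt_of_le (hm R)⟩
  simp only [Finset.mem_filter, Finset.mem_univ, true_and, id] at hq hqmin
  have hqm : q ≤ m := hqmin m ((π.injective.ne hmR.ne).lt_of_le (hm R))
  refine ⟨q, m + 1, by omega, by omega, eq_threeBlockPerm_of _ _ ?_ ?_ ?_ ?_⟩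
  · exact fun x y hxy hy => hpre (by omega) (by omega) hxy
  · exact fun x y hx hxy => hsuf (by omega) (by omega) hxy
  · intro x y hqx hxR hRy
    have hbelow : π x < π R := by
      rcases hqx.lt_or_eq with hqx | hqx
      · exact (hpre (by omega) (by omega) (Fin.lt_def.mpr hqx)).trans hq
      · rwa [show x = q from Fin.ext hqx.symm]
    rcases (show R ≤ y from Fin.le_def.mpr hRy).lt_or_eq with hRy | rfl
    · exact (hπ x R y (by omega) hRy hbelow).1
    · exact hbelow
  · intro x y hRx hyq
    have habove : π R < π y :=
      (π.injective.ne (by omega)).lt_of_le (not_lt.mp fun h => (hqmin y h).not_gt hyq)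
    refine lt_of_le_of_lt ?_ habove
    rcases (show R ≤ x from Fin.le_def.mpr hRx).lt_or_eq with hRx | rfl
    · exact (hsuf hmR (hmR.trans hRx) hRx).le
    · exact le_rfl

end AscentsBoundLater

noncomputable def threeBlockOfPair (n : ℕ) :
    Option {x : Fin n × Fin n // x.1 < x.2} → Perm (Fin n)
  | none => threeBlockPerm n.zero_le le_rfl
  | some x => threeBlockPerm x.2.le x.1.2.is_lt.le

theorem threeBlockOfPair_injective (n : ℕ) : Function.Injective (threeBlockOfPair n) := by
  rintro (_ | ⟨⟨a, b⟩, hab⟩) (_ | ⟨⟨a', b'⟩, hab'⟩) h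
  · rfl
  · have := (eq_of_threeBlockPerm_eq hab' b'.is_lt n.zero_le le_rfl h.symm).2
    omega
  · have := (eq_of_threeBlockPerm_eq hab b.is_lt n.zero_le le_rfl h).2
    omega
  · obtain ⟨ha, hb⟩ := eq_of_threeBlockPerm_eq hab b.is_lt hab'.le b'.is_lt.le h
    simp only [Option.some.injEq, Subtype.mk.injEq, Prod.mk.injEq]
    exact ⟨Fin.ext ha, Fin.ext hb⟩

theorem range_threeBlockOfPair (n : ℕ) :
    Set.range (threeBlockOfPair n) = {π | AscentsBoundLater π} := by
  ext π
  constructor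
  · rintro ⟨_ | _, rfl⟩ <;> simp only [threeBlockOfPair] <;>
      exact ascentsBoundLater_threeBlockPerm _ _
  · intro hπ
    rcases AscentsBoundLater.eq_threeBlockPerm hπ with h | ⟨q, r, hqr, hrn, h⟩
    · exact ⟨none, h.symm⟩
    · exact ⟨some ⟨(⟨q, by omega⟩, ⟨r, hrn⟩), hqr⟩, h.symm⟩

theorem av123_231_card_general (n : ℕ) :
    Nat.card {π : Equiv.Perm (Fin n) //
        PermAvoids π ![1, 2, 3] ∧ PermAvoids π ![2, 3, 1]} =
      (n ^ 2 - n + 2) / 2 := by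
  calc Nat.card {π : Perm (Fin n) // PermAvoids π ![1, 2, 3] ∧ PermAvoids π ![2, 3, 1]}
      = Nat.card (Set.range (threeBlockOfPair n)) := by
        simp_rw [permAvoids_123_and_231_iff, range_threeBlockOfPair]; rfl
    _ = Nat.card (Option {x : Fin n × Fin n // x.1 < x.2}) :=
        Nat.card_range_of_injective (threeBlockOfPair_injective n)
    _ = n.choose 2 + 1 := by
        rw [Finite.card_option, Nat.card_eq_fintype_card, Fintype.card_subtype,
          Fintype.card_product_filter_lt, Fintype.card_fin]
    _ = (n ^ 2 - n + 2) / 2 := by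
        rw [Nat.choose_two_right, sq, ← Nat.mul_sub_one, Nat.add_div_right _ two_pos]

theorem av123_231_card (n : ℕ) (hn : 1 ≤ n) :
    Nat.card {π : Equiv.Perm (Fin n) //
        PermAvoids π ![1, 2, 3] ∧ PermAvoids π ![2, 3, 1]} =
      (n ^ 2 - n + 2) / 2 :=
  av123_231_card_general n
end

section
/- For every natural number n ≥ 1, the number of permutations of length n avoiding both patterns 132 and 312 equals 2^(n−1). -/
open Equiv Function Finset

variable {n : ℕ}

section Extremal

variable {α β : Type*} [LinearOrder α] [LinearOrder β]

def IsPrefixExtremal (f : Fin n → α) : Prop :=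
  ∀ k, (∀ j < k, f j < f k) ∨ (∀ j < k, f k < f j)

def IsSuffixExtremal (f : Fin n → α) : Prop :=
  ∀ k, (∀ j, k < j → f k < f j) ∨ (∀ j, k < j → f j < f k)

instance (f : Fin n → α) : Decidable (IsSuffixExtremal f) := by
  unfold IsSuffixExtremal; infer_instance

lemma isPrefixExtremal_iff_forall_not_lt_lt {f : Fin n → α} (hf : Injective f) :
    IsPrefixExtremal f ↔ ∀ i j k, i < k → j < k → ¬ (f i < f k ∧ f k < f j) := by
  refine ⟨fun h i j k hik hjk ⟨hi, hj⟩ => ?_, fun h k => ?_⟩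
  · rcases h k with hk | hk
    · exact (hk j hjk).asymm hj
    · exact (hk i hik).asymm hi
  · by_contra! hk
    obtain ⟨⟨j, hjk, hj⟩, ⟨i, hik, hi⟩⟩ := hk
    exact h i j k hik hjk ⟨hi.lt_of_ne (hf.ne hik.ne), hj.lt_of_ne (hf.ne hjk.ne')⟩

lemma isSuffixExtremal_comp_rev_iff {f : Fin n → α} :
    IsSuffixExtremal (f ∘ Fin.rev) ↔ IsPrefixExtremal f := by
  unfold IsSuffixExtremal IsPrefixExtremal
  rw [← Fin.revPerm.forall_congr_right]
  refine forall_congr' fun k => (or_congr ?_ ?_).trans or_comm <;>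
    rw [← Fin.revPerm.forall_congr_right] <;> simp [Fin.rev_lt_rev]

lemma StrictMono.isSuffixExtremal_comp_iff {g : α → β} (hg : StrictMono g) {f : Fin n → α} :
    IsSuffixExtremal (g ∘ f) ↔ IsSuffixExtremal f := by
  simp [IsSuffixExtremal, hg.lt_iff_lt]

lemma isSuffixExtremal_succ_iff {f : Fin (n + 1) → α} :
    IsSuffixExtremal f ↔
      ((∀ j : Fin n, f 0 < f j.succ) ∨ (∀ j : Fin n, f j.succ < f 0)) ∧
        IsSuffixExtremal (f ∘ Fin.succ) := by
  simp [IsSuffixExtremal, Fin.forall_fin_succ, Fin.succ_pos]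

end Extremal

lemma permContains_of_strictMono {k : ℕ} {π : Perm (Fin n)} {p : Fin k → ℕ} (hp : Injective p)
    {f : Fin k → Fin n} (hf : StrictMono f) (h : ∀ a b, p a < p b → π (f a) < π (f b)) :
    PermContains π p := by
  refine ⟨f, hf, fun a b => ⟨h a b, fun hπ => ?_⟩⟩
  rcases lt_trichotomy (p a) (p b) with hab | hab | hab
  · exact hab
  · exact absurd (hp hab ▸ hπ) (lt_irrefl _)
  · exact absurd hπ (h b a hab).asymm

lemma strictMono_vecCons₃ {α : Type*} [Preorder α] {a b c : α} (hab : a < b) (hbc : b < c) :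
    StrictMono ![a, b, c] :=
  Fin.strictMono_iff_lt_succ.2 (by simp [Fin.forall_fin_two, hab, hbc])

lemma permContains_132_or_312_iff (π : Perm (Fin n)) :
    PermContains π ![1, 3, 2] ∨ PermContains π ![3, 1, 2] ↔
      ∃ i j k, i < k ∧ j < k ∧ π i < π k ∧ π k < π j := by
  constructor
  · rintro (⟨f, hf, hp⟩ | ⟨f, hf, hp⟩)
    · exact ⟨f 0, f 1, f 2, hf (by decide), hf (by decide), (hp 0 2).1 (by decide),
        (hp 2 1).1 (by decide)⟩
    · exact ⟨f 1, f 0, f 2, hf (by decide), hf (by decide), (hp 1 2).1 (by decide),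
        (hp 2 0).1 (by decide)⟩
  · rintro ⟨i, j, k, hik, hjk, hi, hj⟩
    rcases lt_trichotomy i j with hij | rfl | hji
    · refine .inl (permContains_of_strictMono (by decide) (strictMono_vecCons₃ hij hjk) ?_)
      intro a b; fin_cases a <;> fin_cases b <;> simp [hi, hj, hi.trans hj]
    · exact absurd (hi.trans hj) (lt_irrefl _)
    · refine .inr (permContains_of_strictMono (by decide) (strictMono_vecCons₃ hji hik) ?_)
      intro a b; fin_cases a <;> fin_cases b <;> simp [hi, hj, hi.trans hj]

lemma permAvoids_132_and_312_iff (π : Perm (Fin n)) :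
    PermAvoids π ![1, 3, 2] ∧ PermAvoids π ![3, 1, 2] ↔ IsPrefixExtremal π := by
  rw [isPrefixExtremal_iff_forall_not_lt_lt π.injective, PermAvoids, PermAvoids, ← not_or,
    permContains_132_or_312_iff]
  push Not
  rfl

lemma IsSuffixExtremal.apply_zero_eq_zero_or_last {τ : Perm (Fin (n + 1))}
    (hτ : IsSuffixExtremal τ) : τ 0 = 0 ∨ τ 0 = Fin.last n := by
  have hpos {v : Fin (n + 1)} (hv : τ 0 ≠ v) : 0 < τ.symm v :=
    Fin.pos_iff_ne_zero.2 fun h => hv (τ.symm_apply_eq.1 h).symm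
  rcases hτ 0 with h | h
  · refine .inl (by_contra fun h0 => ?_)
    simpa using h _ (hpos h0)
  · refine .inr (by_contra fun hl => ?_)
    exact (Fin.le_last _).not_gt (by simpa using h _ (hpos hl))

namespace Equiv.Perm

def consZero (σ : Perm (Fin n)) : Perm (Fin (n + 1)) := decomposeFin.symm (0, σ)

def consLast (σ : Perm (Fin n)) : Perm (Fin (n + 1)) := (finRotate _).symm * σ.consZero

@[simp] lemma consZero_apply_zero (σ : Perm (Fin n)) : σ.consZero 0 = 0 :=
  decomposeFin_symm_apply_zero _ _

@[simp] lemma consZero_apply_succ (σ : Perm (Fin n)) (i : Fin n) :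
    σ.consZero i.succ = (σ i).succ := by
  simp [consZero, decomposeFin_symm_apply_succ]

@[simp] lemma consLast_apply_zero (σ : Perm (Fin n)) : σ.consLast 0 = Fin.last n := by
  rw [consLast, mul_apply, consZero_apply_zero, symm_apply_eq, finRotate_last]

@[simp] lemma consLast_apply_succ (σ : Perm (Fin n)) (i : Fin n) :
    σ.consLast i.succ = (σ i).castSucc := by
  rw [consLast, mul_apply, consZero_apply_succ, symm_apply_eq, finRotate_apply,
    Fin.coeSucc_eq_succ]

lemma consZero_injective : Injective (consZero (n := n)) :=
  fun _ _ h => congrArg Prod.snd (decomposeFin.symm.injective h)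

lemma consLast_injective : Injective (consLast (n := n)) :=
  (mul_right_injective _).comp consZero_injective

lemma exists_consZero_eq {τ : Perm (Fin (n + 1))} (hτ : τ 0 = 0) :
    ∃ σ : Perm (Fin n), σ.consZero = τ := by
  have h : (decomposeFin τ).1 = 0 := by
    rw [← hτ]
    conv_rhs => rw [← decomposeFin.symm_apply_apply τ]
    exact (decomposeFin_symm_apply_zero _ _).symm
  exact ⟨(decomposeFin τ).2, by rw [consZero, ← h, Prod.mk.eta, symm_apply_apply]⟩

lemma exists_consLast_eq {τ : Perm (Fin (n + 1))} (hτ : τ 0 = Fin.last n) :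
    ∃ σ : Perm (Fin n), σ.consLast = τ := by
  obtain ⟨σ, hσ⟩ := exists_consZero_eq (τ := finRotate _ * τ) (by simp [hτ])
  exact ⟨σ, by rw [consLast, hσ]; ext; simp⟩

lemma isSuffixExtremal_consZero_iff (σ : Perm (Fin n)) :
    IsSuffixExtremal σ.consZero ↔ IsSuffixExtremal σ := by
  have htail : σ.consZero ∘ Fin.succ = Fin.succ ∘ σ := funext (consZero_apply_succ σ)
  rw [isSuffixExtremal_succ_iff, htail, Fin.strictMono_succ.isSuffixExtremal_comp_iff]
  simp [Fin.succ_pos]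

lemma isSuffixExtremal_consLast_iff (σ : Perm (Fin n)) :
    IsSuffixExtremal σ.consLast ↔ IsSuffixExtremal σ := by
  have htail : σ.consLast ∘ Fin.succ = Fin.castSucc ∘ σ := funext (consLast_apply_succ σ)
  rw [isSuffixExtremal_succ_iff, htail, Fin.strictMono_castSucc.isSuffixExtremal_comp_iff]
  simp [Fin.castSucc_lt_last]

lemma isSuffixExtremal_iff_exists (τ : Perm (Fin (n + 1))) :
    IsSuffixExtremal τ ↔
      ∃ σ : Perm (Fin n), IsSuffixExtremal σ ∧ (σ.consZero = τ ∨ σ.consLast = τ) := by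
  refine ⟨fun hτ => ?_, ?_⟩
  · rcases hτ.apply_zero_eq_zero_or_last with h | h
    · obtain ⟨σ, rfl⟩ := exists_consZero_eq h
      exact ⟨σ, (isSuffixExtremal_consZero_iff σ).1 hτ, .inl rfl⟩
    · obtain ⟨σ, rfl⟩ := exists_consLast_eq h
      exact ⟨σ, (isSuffixExtremal_consLast_iff σ).1 hτ, .inr rfl⟩
  · rintro ⟨σ, hσ, rfl | rfl⟩
    exacts [(isSuffixExtremal_consZero_iff σ).2 hσ, (isSuffixExtremal_consLast_iff σ).2 hσ]

end Equiv.Perm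

open Equiv.Perm

def suffixExtremalPerms (n : ℕ) : Finset (Perm (Fin n)) := {τ | IsSuffixExtremal τ}

lemma suffixExtremalPerms_succ (n : ℕ) :
    suffixExtremalPerms (n + 1) =
      (suffixExtremalPerms n).image consZero ∪ (suffixExtremalPerms n).image consLast := by
  ext τ
  simp [suffixExtremalPerms, isSuffixExtremal_iff_exists, and_or_left, exists_or]

lemma card_suffixExtremalPerms (n : ℕ) : #(suffixExtremalPerms (n + 1)) = 2 ^ n := by
  induction n with
  | zero => rfl
  | succ n ih =>
    have hdisj : Disjoint ((suffixExtremalPerms (n + 1)).image consZero)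
        ((suffixExtremalPerms (n + 1)).image consLast) := by
      simp only [disjoint_left, mem_image]
      rintro _ ⟨σ, -, rfl⟩ ⟨σ', -, h⟩
      simpa using congrArg (· 0) h
    rw [suffixExtremalPerms_succ, card_union_of_disjoint hdisj,
      card_image_of_injective _ consZero_injective,
      card_image_of_injective _ consLast_injective, ih, pow_succ, mul_two]

theorem av132_312_card_general (n : ℕ) :
    Nat.card {π : Equiv.Perm (Fin n) //
        PermAvoids π ![1, 3, 2] ∧ PermAvoids π ![3, 1, 2]} =
      2 ^ (n - 1) := by
  have hrev : {π : Perm (Fin n) // PermAvoids π ![1, 3, 2] ∧ PermAvoids π ![3, 1, 2]} ≃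
      {τ : Perm (Fin n) // IsSuffixExtremal τ} :=
    (Equiv.mulRight Fin.revPerm).subtypeEquiv fun π => by
      rw [permAvoids_132_and_312_iff, coe_mulRight, coe_mul]
      exact isSuffixExtremal_comp_rev_iff.symm
  rw [Nat.card_congr hrev, Nat.card_eq_fintype_card, Fintype.card_subtype]
  cases n with
  | zero => rfl -- the empty permutation, and `0 - 1 = 0` in `ℕ`
  | succ m => exact card_suffixExtremalPerms m

theorem av132_312_card (n : ℕ) (hn : 1 ≤ n) :
    Nat.card {π : Equiv.Perm (Fin n) //
        PermAvoids π ![1, 3, 2] ∧ PermAvoids π ![3, 1, 2]} =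
      2 ^ (n - 1) :=
  av132_312_card_general n
end

section
/- For every natural number n ≥ 1, the number of permutations of length n avoiding both patterns 231 and 312 equals 2^(n−1). -/
namespace Av231312

/-- Auxiliary: least `j ≥ i` with `W j = true`, searching with given fuel. -/
def bend (W : ℕ → Bool) : ℕ → ℕ → ℕ
  | 0, i => i
  | f+1, i => if W i then i else bend W f (i+1)

/-- Auxiliary: greatest `j ≤ i` with `j = 0` or `W (j-1) = true`. -/
def ast (W : ℕ → Bool) : ℕ → ℕ
  | 0 => 0
  | i+1 => if W i then i + 1 else ast W i

lemma bend_ge (W : ℕ → Bool) : ∀ f i, i ≤ bend W f i := by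
  intro f
  induction f with
  | zero => intro i; simp [bend]
  | succ f ih =>
    intro i
    simp only [bend]
    split
    · exact le_rfl
    · exact le_trans (Nat.le_succ i) (ih (i+1))

lemma bend_le (W : ℕ → Bool) : ∀ f i, bend W f i ≤ i + f := by
  intro f
  induction f with
  | zero => intro i; simp [bend]
  | succ f ih =>
    intro i
    simp only [bend]
    split
    · omega
    · have := ih (i+1); omega

lemma bend_spec (W : ℕ → Bool) : ∀ f i, W (bend W f i) = true ∨ bend W f i = i + f := by
  intro f
  induction f with
  | zero => intro i; right; simp [bend]
  | succ f ih =>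
    intro i
    simp only [bend]
    split
    · left; assumption
    · rcases ih (i+1) with h | h
      · left; exact h
      · right; omega

lemma bend_false (W : ℕ → Bool) :
    ∀ f i j, i ≤ j → j < bend W f i → W j = false := by
  intro f
  induction f with
  | zero => intro i j h1 h2; simp [bend] at h2; omega
  | succ f ih =>
    intro i j h1 h2
    simp only [bend] at h2
    by_cases hw : W i
    · simp [hw] at h2; omega
    · simp [hw] at h2
      rcases Nat.eq_or_lt_of_le h1 with rfl | hlt
      · simpa using hw
      · exact ih (i+1) j hlt h2

lemma bend_eq (W : ℕ → Bool) :
    ∀ f i z, i ≤ z → z ≤ i + f → W z = true →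
      (∀ j, i ≤ j → j < z → W j = false) → bend W f i = z := by
  intro f
  induction f with
  | zero => intro i z h1 h2 _ _; simp [bend]; omega
  | succ f ih =>
    intro i z h1 h2 h3 h4
    simp only [bend]
    by_cases hw : W i
    · simp [hw]
      rcases Nat.eq_or_lt_of_le h1 with rfl | hlt
      · rfl
      · have := h4 i le_rfl hlt; simp [hw] at this
    · simp [hw]
      rcases Nat.eq_or_lt_of_le h1 with rfl | hlt
      · rw [h3] at hw; simp at hw
      · exact ih (i+1) z hlt (by omega) h3 (fun j hj1 hj2 => h4 j (by omega) hj2)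

lemma ast_le (W : ℕ → Bool) : ∀ i, ast W i ≤ i := by
  intro i
  induction i with
  | zero => simp [ast]
  | succ i ih => simp only [ast]; split <;> omega

lemma ast_false (W : ℕ → Bool) : ∀ i j, ast W i ≤ j → j < i → W j = false := by
  intro i
  induction i with
  | zero => intro j h1 h2; omega
  | succ i ih =>
    intro j h1 h2
    simp only [ast] at h1
    by_cases hw : W i
    · simp [hw] at h1; omega
    · simp [hw] at h1
      rcases Nat.lt_succ_iff_lt_or_eq.mp h2 with h | rfl
      · exact ih j h1 h
      · simpa using hw

lemma ast_zero_or (W : ℕ → Bool) : ∀ i, ast W i = 0 ∨ W (ast W i - 1) = true := by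
  intro i
  induction i with
  | zero => left; simp [ast]
  | succ i ih =>
    simp only [ast]
    by_cases hw : W i
    · right; simpa [hw]
    · simpa [hw] using ih

lemma ast_eq (W : ℕ → Bool) :
    ∀ i y, y ≤ i → (y = 0 ∨ W (y - 1) = true) →
      (∀ j, y ≤ j → j < i → W j = false) → ast W i = y := by
  intro i
  induction i with
  | zero => intro y h1 _ _; simp [ast]; omega
  | succ i ih =>
    intro y h1 h2 h3
    simp only [ast]
    by_cases hw : W i
    · simp [hw]
      by_cases hy : y ≤ i
      · have := h3 i hy (by omega); simp [hw] at this
      · omega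
    · simp [hw]
      by_cases hy : y ≤ i
      · exact ih y hy h2 (fun j hj1 hj2 => h3 j hj1 (by omega))
      · have : y = i + 1 := by omega
        subst this
        rcases h2 with h | h
        · omega
        · simp at h; simp [h] at hw


variable (m : ℕ) (W : ℕ → Bool)

/-- End of the block containing `i`. -/
def eN (i : ℕ) : ℕ := bend W (m - i) i

/-- The layered permutation determined by `W`, as a function on `ℕ`. -/
def FN (i : ℕ) : ℕ := ast W i + (eN m W i - i)

lemma eN_ge (i : ℕ) : i ≤ eN m W i := bend_ge W _ i

lemma eN_le {i : ℕ} (hi : i ≤ m) : eN m W i ≤ m := by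
  have := bend_le W (m - i) i
  unfold eN; omega

lemma eN_true (hW : W m = true) {i : ℕ} (hi : i ≤ m) : W (eN m W i) = true := by
  rcases bend_spec W (m - i) i with h | h
  · exact h
  · unfold eN; rw [h]; have : i + (m - i) = m := by omega
    rw [this]; exact hW

lemma eN_false {i : ℕ} (j : ℕ) (h1 : i ≤ j) (h2 : j < eN m W i) : W j = false :=
  bend_false W _ i j h1 h2

lemma eN_eq {i z : ℕ} (hi : i ≤ m) (h1 : i ≤ z) (h2 : z ≤ m) (h3 : W z = true)
    (h4 : ∀ j, i ≤ j → j < z → W j = false) : eN m W i = z :=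
  bend_eq W _ i z h1 (by omega) h3 h4

lemma block_lemma (hW : W m = true) {i k : ℕ} (hi : i ≤ m)
    (hk1 : ast W i ≤ k) (hk2 : k ≤ eN m W i) :
    ast W k = ast W i ∧ eN m W k = eN m W i := by
  have hae : ast W i ≤ i := ast_le W i
  have hie : i ≤ eN m W i := eN_ge m W i
  have hem : eN m W i ≤ m := eN_le m W hi
  have hfalse : ∀ j, ast W i ≤ j → j < eN m W i → W j = false := by
    intro j hj1 hj2
    by_cases h : j < i
    · exact ast_false W i j hj1 h
    · exact eN_false m W j (by omega) hj2
  constructor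
  · exact ast_eq W k (ast W i) hk1 (ast_zero_or W i)
      (fun j hj1 hj2 => hfalse j hj1 (by omega))
  · exact eN_eq m W (by omega) hk2 hem (eN_true m W hW hi)
      (fun j hj1 hj2 => hfalse j (by omega) hj2)

lemma FN_bounds {i : ℕ} (hi : i ≤ m) :
    ast W i ≤ FN m W i ∧ FN m W i ≤ eN m W i := by
  have hae : ast W i ≤ i := ast_le W i
  have hie : i ≤ eN m W i := eN_ge m W i
  unfold FN; omega

lemma FN_le {i : ℕ} (hi : i ≤ m) : FN m W i ≤ m :=
  le_trans (FN_bounds m W hi).2 (eN_le m W hi)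

lemma FN_invol (hW : W m = true) {i : ℕ} (hi : i ≤ m) : FN m W (FN m W i) = i := by
  have hae : ast W i ≤ i := ast_le W i
  have hie : i ≤ eN m W i := eN_ge m W i
  have hb := FN_bounds m W hi
  obtain ⟨ha, he⟩ := block_lemma m W hW hi hb.1 hb.2
  unfold FN at *
  rw [ha, he]
  omega

lemma FN_step_true {i : ℕ} (hi : i + 1 ≤ m) (hw : W i = true) :
    FN m W i ≤ i ∧ i < FN m W (i+1) := by
  have he : eN m W i = i := eN_eq m W (by omega) le_rfl (by omega) hw (by omega)
  have ha : ast W (i+1) = i + 1 := by simp [ast, hw]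
  have hge : i + 1 ≤ eN m W (i+1) := eN_ge m W (i+1)
  have hae : ast W i ≤ i := ast_le W i
  constructor
  · unfold FN; rw [he]; omega
  · unfold FN; rw [ha]; omega

lemma FN_step_false (hW : W m = true) {i : ℕ} (hi : i + 1 ≤ m) (hw : W i = false) :
    FN m W (i+1) + 1 = FN m W i := by
  have hie : i ≤ eN m W i := eN_ge m W i
  have hne : eN m W i ≠ i := by
    intro h
    have := eN_true m W hW (i := i) (by omega)
    rw [h, hw] at this; simp at this
  have hk2 : i + 1 ≤ eN m W i := by omega
  have hae : ast W i ≤ i := ast_le W i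
  obtain ⟨ha, he⟩ := block_lemma m W hW (i := i) (k := i+1) (by omega) (by omega) hk2
  unfold FN
  rw [ha, he]
  omega


/-- Extend a word on `Fin m` to `ℕ`, with `true` beyond. -/
def mkW (w : Fin m → Bool) : ℕ → Bool := fun j => if h : j < m then w ⟨j, h⟩ else true

lemma mkW_m (w : Fin m → Bool) : mkW m w m = true := by simp [mkW]

/-- The layered permutation determined by a word. -/
def Fperm (w : Fin m → Bool) : Equiv.Perm (Fin (m+1)) :=
  Function.Involutive.toPerm
    (fun i => ⟨FN m (mkW m w) i.val, by
      have := FN_le m (mkW m w) (i := i.val) (by omega)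
      omega⟩)
    (fun i => by
      ext
      exact FN_invol m (mkW m w) (mkW_m m w) (by omega))

lemma Fperm_val (w : Fin m → Bool) (i : Fin (m+1)) :
    (Fperm m w i : ℕ) = FN m (mkW m w) i.val := rfl

/-- Adjacency property characterizing `{231, 312}`-avoiding permutations. -/
def Adj {n : ℕ} (π : Equiv.Perm (Fin n)) : Prop :=
  ∀ i : ℕ, (h : i + 1 < n) → (π ⟨i, by omega⟩ : ℕ) ≤ (π ⟨i + 1, h⟩ : ℕ) + 1

/-- The ascent word of a permutation. -/
def word {m : ℕ} (π : Equiv.Perm (Fin (m+1))) : Fin m → Bool :=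
  fun i => decide ((π ⟨i.val, by omega⟩ : ℕ) < (π ⟨i.val + 1, by omega⟩ : ℕ))

lemma Fperm_adj (w : Fin m → Bool) : Adj (Fperm m w) := by
  intro i h
  rw [Fperm_val, Fperm_val]
  simp only
  by_cases hw : mkW m w i = true
  · have := FN_step_true m (mkW m w) (i := i) (by omega) hw
    omega
  · have := FN_step_false m (mkW m w) (mkW_m m w) (i := i) (by omega)
      (by simpa using hw)
    omega

lemma word_Fperm (w : Fin m → Bool) : word (Fperm m w) = w := by
  funext i
  have hi : (i : ℕ) < m := i.isLt
  have hW : mkW m w i = w i := by simp [mkW, hi]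
  unfold word
  rw [Fperm_val, Fperm_val]
  simp only
  by_cases hw : mkW m w i = true
  · have := FN_step_true m (mkW m w) (i := i) (by omega) hw
    rw [hW] at hw
    simp [hw]
    omega
  · have hwf : mkW m w i = false := by simpa using hw
    have := FN_step_false m (mkW m w) (mkW_m m w) (i := i) (by omega) hwf
    rw [hW] at hwf
    simp [hwf]
    omega

/-- Discrete intermediate value theorem for permutations with the adjacency
property: going right, values decrease by at most one per step, so every
value between is attained. -/
lemma ivt {n : ℕ} (π : Equiv.Perm (Fin n)) (hA : Adj π) (d : ℕ) :
    ∀ j k : ℕ, (hj : j < n) → (hk : k < n) → k = j + d →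
    ∀ v, (π ⟨k, hk⟩ : ℕ) ≤ v → v ≤ (π ⟨j, hj⟩ : ℕ) →
    ∃ q, ∃ hq : q < n, j ≤ q ∧ q ≤ k ∧ (π ⟨q, hq⟩ : ℕ) = v := by
  induction d with
  | zero =>
    intro j k hj hk hjk v h1 h2
    have hkj : k = j := by omega
    subst hkj
    exact ⟨k, hk, le_rfl, le_rfl, le_antisymm h1 h2⟩
  | succ d ih =>
    intro j k hj hk hjk v h1 h2
    by_cases hv : v = (π ⟨j, hj⟩ : ℕ)
    · exact ⟨j, hj, le_rfl, by omega, hv.symm⟩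
    · have hj1 : j + 1 < n := by omega
      have hadj := hA j hj1
      have h2' : v ≤ (π ⟨j + 1, hj1⟩ : ℕ) := by omega
      obtain ⟨q, hq, hq1, hq2, hq3⟩ := ih (j+1) k hj1 hk (by omega) v h1 h2'
      exact ⟨q, hq, by omega, hq2, hq3⟩


lemma strictMono_vec3 {α : Type*} [Preorder α] {x y z : α} (h1 : x < y) (h2 : y < z) :
    StrictMono ![x, y, z] := by
  intro a b hab
  fin_cases a <;> fin_cases b <;>
    simp_all <;> first | exact h1 | exact h2 | exact h1.trans h2 | exact absurd hab (by decide)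


lemma avoids_of_adj {n : ℕ} (π : Equiv.Perm (Fin n)) (hA : Adj π) :
    PermAvoids π ![2, 3, 1] ∧ PermAvoids π ![3, 1, 2] := by
  constructor
  · rintro ⟨f, hsm, hiff⟩
    have hxy : f 0 < f 1 := hsm (by decide)
    have hyz : f 1 < f 2 := hsm (by decide)
    have h1 : π (f 0) < π (f 1) := (hiff 0 1).mp (by simp [Matrix.cons_val_zero, Matrix.cons_val_one, Matrix.head_cons, Matrix.cons_val_two, Matrix.tail_cons])
    have h2 : π (f 2) < π (f 0) := (hiff 2 0).mp (by simp [Matrix.cons_val_zero, Matrix.cons_val_one, Matrix.head_cons, Matrix.cons_val_two, Matrix.tail_cons])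
    -- IVT on [f 1, f 2] hitting value π (f 0)
    obtain ⟨q, hq, hq1, hq2, hq3⟩ := ivt π hA ((f 2 : ℕ) - (f 1 : ℕ))
      (f 1 : ℕ) (f 2 : ℕ) (f 1).isLt (f 2).isLt (by omega) (π (f 0) : ℕ)
      (le_of_lt h2) (le_of_lt h1)
    have : (⟨q, hq⟩ : Fin n) = f 0 := π.injective (Fin.ext hq3)
    have : q = (f 0 : ℕ) := congrArg Fin.val this
    omega
  · rintro ⟨f, hsm, hiff⟩
    have hxy : f 0 < f 1 := hsm (by decide)
    have hyz : f 1 < f 2 := hsm (by decide)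
    have h1 : π (f 1) < π (f 2) := (hiff 1 2).mp (by simp [Matrix.cons_val_zero, Matrix.cons_val_one, Matrix.head_cons, Matrix.cons_val_two, Matrix.tail_cons])
    have h2 : π (f 2) < π (f 0) := (hiff 2 0).mp (by simp [Matrix.cons_val_zero, Matrix.cons_val_one, Matrix.head_cons, Matrix.cons_val_two, Matrix.tail_cons])
    obtain ⟨q, hq, hq1, hq2, hq3⟩ := ivt π hA ((f 1 : ℕ) - (f 0 : ℕ))
      (f 0 : ℕ) (f 1 : ℕ) (f 0).isLt (f 1).isLt (by omega) (π (f 2) : ℕ)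
      (le_of_lt h1) (le_of_lt h2)
    have : (⟨q, hq⟩ : Fin n) = f 2 := π.injective (Fin.ext hq3)
    have : q = (f 2 : ℕ) := congrArg Fin.val this
    omega

lemma contains231 {n : ℕ} (π : Equiv.Perm (Fin n)) (x y z : Fin n)
    (hxy : x < y) (hyz : y < z)
    (h01 : (π x : ℕ) < (π y : ℕ)) (h20 : (π z : ℕ) < (π x : ℕ)) :
    PermContains π ![2, 3, 1] := by
  refine ⟨![x, y, z], strictMono_vec3 hxy hyz, ?_⟩
  intro a b
  have e0 : (![x, y, z] : Fin 3 → Fin n) ⟨0, by omega⟩ = x := rfl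
  have e1 : (![x, y, z] : Fin 3 → Fin n) ⟨1, by omega⟩ = y := rfl
  have e2 : (![x, y, z] : Fin 3 → Fin n) ⟨2, by omega⟩ = z := rfl
  fin_cases a <;> fin_cases b <;>
    simp only [e0, e1, e2, Fin.lt_def] <;>
    simp [Matrix.cons_val_zero, Matrix.cons_val_one, Matrix.head_cons,
      Matrix.cons_val_two, Matrix.tail_cons] <;> omega

lemma contains312 {n : ℕ} (π : Equiv.Perm (Fin n)) (x y z : Fin n)
    (hxy : x < y) (hyz : y < z)
    (h12 : (π y : ℕ) < (π z : ℕ)) (h20 : (π z : ℕ) < (π x : ℕ)) :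
    PermContains π ![3, 1, 2] := by
  refine ⟨![x, y, z], strictMono_vec3 hxy hyz, ?_⟩
  intro a b
  have e0 : (![x, y, z] : Fin 3 → Fin n) ⟨0, by omega⟩ = x := rfl
  have e1 : (![x, y, z] : Fin 3 → Fin n) ⟨1, by omega⟩ = y := rfl
  have e2 : (![x, y, z] : Fin 3 → Fin n) ⟨2, by omega⟩ = z := rfl
  fin_cases a <;> fin_cases b <;>
    simp only [e0, e1, e2, Fin.lt_def] <;>
    simp [Matrix.cons_val_zero, Matrix.cons_val_one, Matrix.head_cons,
      Matrix.cons_val_two, Matrix.tail_cons] <;> omega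

lemma adj_of_avoids {n : ℕ} (π : Equiv.Perm (Fin n))
    (h1 : PermAvoids π ![2, 3, 1]) (h2 : PermAvoids π ![3, 1, 2]) : Adj π := by
  intro i h
  by_contra hc
  push_neg at hc
  have hx : i < n := by omega
  have hvlt : (π ⟨i, hx⟩ : ℕ) - 1 < n := by have := (π ⟨i, hx⟩).isLt; omega
  set v : Fin n := ⟨(π ⟨i, hx⟩ : ℕ) - 1, hvlt⟩ with hvdef
  set p : Fin n := π.symm v with hpdef
  have hpv : π p = v := π.apply_symm_apply v
  have e0 : (π p : ℕ) = (π ⟨i, hx⟩ : ℕ) - 1 := congrArg Fin.val hpv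
  have hc' : (π ⟨i + 1, h⟩ : ℕ) + 1 < (π ⟨i, hx⟩ : ℕ) := hc
  have hpx : p ≠ ⟨i, hx⟩ := by
    intro he; rw [he] at e0; omega
  have hpy : p ≠ ⟨i + 1, h⟩ := by
    intro he; rw [he] at e0; omega
  have hpx' : (p : ℕ) ≠ i := fun he => hpx (Fin.ext he)
  have hpy' : (p : ℕ) ≠ i + 1 := fun he => hpy (Fin.ext he)
  rcases Nat.lt_or_ge (p : ℕ) i with hlt | hge
  · exact h1 (contains231 π p ⟨i, hx⟩ ⟨i + 1, h⟩ (by simpa [Fin.lt_def] using hlt)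
      (by simp [Fin.lt_def]) (by omega) (by omega))
  · have hgt : i + 1 < (p : ℕ) := by omega
    exact h2 (contains312 π ⟨i, hx⟩ ⟨i + 1, h⟩ p (by simp [Fin.lt_def])
      (by simpa [Fin.lt_def] using hgt) (by omega) (by omega))

/-- The value of a permutation of `Fin (m+1)` at a natural number index. -/
def pval {m : ℕ} (π : Equiv.Perm (Fin (m+1))) (j : ℕ) : ℕ :=
  if h : j < m + 1 then (π ⟨j, h⟩ : ℕ) else 0

lemma pval_eq {m : ℕ} (π : Equiv.Perm (Fin (m+1))) {j : ℕ} (h : j < m + 1) :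
    pval π j = (π ⟨j, h⟩ : ℕ) := dif_pos h

lemma pval_lt {m : ℕ} (π : Equiv.Perm (Fin (m+1))) {j : ℕ} (h : j < m + 1) :
    pval π j < m + 1 := by
  rw [pval_eq π h]; exact (π ⟨j, h⟩).isLt

lemma pval_inj {m : ℕ} (π : Equiv.Perm (Fin (m+1))) {i j : ℕ}
    (hi : i < m + 1) (hj : j < m + 1) (h : pval π i = pval π j) : i = j := by
  rw [pval_eq π hi, pval_eq π hj] at h
  exact congrArg Fin.val (π.injective (Fin.val_injective h))

lemma ivt' {m : ℕ} (π : Equiv.Perm (Fin (m+1))) (hA : Adj π) (j k : ℕ)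
    (hjk : j ≤ k) (hk : k < m + 1) (v : ℕ)
    (h1 : pval π k ≤ v) (h2 : v ≤ pval π j) :
    ∃ q, j ≤ q ∧ q ≤ k ∧ pval π q = v := by
  have hj : j < m + 1 := by omega
  rw [pval_eq π hk] at h1
  rw [pval_eq π hj] at h2
  obtain ⟨q, hq, hq1, hq2, hq3⟩ := ivt π hA (k - j) j k hj hk (by omega) v h1 h2
  exact ⟨q, hq1, hq2, by rw [pval_eq π hq]; exact hq3⟩

lemma word_iff {m : ℕ} (π : Equiv.Perm (Fin (m+1))) {j : ℕ} (hj : j < m) :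
    (mkW m (word π) j = true) ↔ pval π j < pval π (j + 1) := by
  unfold mkW word
  rw [dif_pos hj]
  rw [pval_eq π (show j < m + 1 by omega), pval_eq π (show j + 1 < m + 1 by omega)]
  exact decide_eq_true_iff

lemma FG_claim {m : ℕ} (π : Equiv.Perm (Fin (m+1))) (hA : Adj π) :
    ∀ t, t ≤ m → mkW m (word π) t = true →
      ∀ p, p ≤ t → pval π p = FN m (mkW m (word π)) p ∧ pval π p ≤ t := by
  set W := mkW m (word π) with hWdef
  have hWm : W m = true := mkW_m m (word π)
  have hasc : ∀ j, j < m → W j = true → pval π j < pval π (j + 1) := by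
    intro j hj hW
    exact (word_iff π hj).mp hW
  have hdesc : ∀ j, j < m → W j = false → pval π j = pval π (j + 1) + 1 := by
    intro j hj hW
    have h1 : ¬ pval π j < pval π (j + 1) := by
      intro hcon
      have h := (word_iff π hj).mpr hcon
      rw [← hWdef, hW] at h
      simp at h
    have h2 : pval π j ≠ pval π (j + 1) := by
      intro he
      have := pval_inj π (by omega) (by omega) he
      omega
    have h3 := hA j (by omega)
    rw [← pval_eq π (show j < m + 1 by omega), ← pval_eq π (show j + 1 < m + 1 by omega)] at h3
    omega
  intro t
  induction t using Nat.strong_induction_on with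
  | _ t ih =>
  intro ht hWt p hp
  set s := ast W t with hsdef
  have hst : s ≤ t := ast_le W t
  have hbf : ∀ j, s ≤ j → j < t → W j = false := fun j h1 h2 => ast_false W t j h1 h2
  have hline : ∀ d p', p' + d = t → s ≤ p' → pval π p' = pval π t + d := by
    intro d
    induction d with
    | zero =>
      intro p' h1 _
      have h : p' = t := by omega
      rw [h]
      omega
    | succ d ihd =>
      intro p' h1 h2
      have hjm : p' < m := by omega
      have hd1 := hdesc p' hjm (hbf p' h2 (by omega))
      have hd2 := ihd (p' + 1) (by omega) (by omega)
      omega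
  have hsmall : ∀ q, q < s → pval π q < s := by
    intro q hq
    have hspos : 0 < s := by omega
    have hW' : W (s - 1) = true := by
      rcases ast_zero_or W t with h | h
      · omega
      · exact h
    have := (ih (s - 1) (by omega) (by omega) hW' q (by omega)).2
    omega
  have hge : s ≤ pval π t := by
    by_contra hlt
    push_neg at hlt
    have hinj : Function.Injective
        (fun q : Fin s => (⟨pval π q, hsmall q q.isLt⟩ : Fin s)) := by
      intro q1 q2 he
      have h := congrArg Fin.val he
      simp only at h
      exact Fin.ext (pval_inj π (by omega) (by omega) h)
    obtain ⟨q, hq⟩ := Finite.surjective_of_injective hinj ⟨pval π t, hlt⟩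
    have h := congrArg Fin.val hq
    simp only at h
    have : (q : ℕ) = t := pval_inj π (by omega) (by omega) h
    have := q.isLt
    omega
  have hle : pval π t ≤ s := by
    by_contra hgt
    push_neg at hgt
    have hvt : pval π t < m + 1 := pval_lt π (by omega)
    have hvlt : pval π t - 1 < m + 1 := by omega
    set pf : Fin (m+1) := π.symm ⟨pval π t - 1, hvlt⟩ with hpf
    have hpfv : pval π pf.val = pval π t - 1 := by
      rw [pval_eq π pf.isLt]
      rw [show (⟨(pf : ℕ), pf.isLt⟩ : Fin (m+1)) = pf from rfl]
      rw [hpf, π.apply_symm_apply]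
    have hpfs : ¬ (pf : ℕ) < s := by
      intro hcon
      have := hsmall _ hcon
      omega
    have hpfblock : (pf : ℕ) ≤ t → False := by
      intro hcon
      have := hline (t - (pf : ℕ)) (pf : ℕ) (by omega) (by omega)
      omega
    have hpfgt : t < (pf : ℕ) := by
      by_contra hcon
      exact hpfblock (by omega)
    have htm : t < m := by have := pf.isLt; omega
    have hta := hasc t htm hWt
    obtain ⟨q, hq1, hq2, hq3⟩ := ivt' π hA (t + 1) (pf : ℕ) (by omega) pf.isLt
      (pval π t) (by omega) (by omega)
    have : q = t := pval_inj π (by omega) (by omega) hq3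
    omega
  have hpt : pval π t = s := le_antisymm hle hge
  have heNt : eN m W t = t := eN_eq m W ht le_rfl ht hWt (by omega)
  by_cases hps : s ≤ p
  · have hb := block_lemma m W hWm (i := t) ht (k := p)
      (by rw [← hsdef]; omega) (by rw [heNt]; omega)
    have hval := hline (t - p) p (by omega) hps
    unfold FN
    rw [hb.1, hb.2, heNt, ← hsdef]
    constructor
    · omega
    · omega
  · have hspos : 0 < s := by omega
    have hW' : W (s - 1) = true := by
      rcases ast_zero_or W t with h | h
      · omega
      · exact h
    have h := ih (s - 1) (by omega) (by omega) hW' p (by omega)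
    exact ⟨h.1, by omega⟩

lemma Fperm_word {m : ℕ} (π : Equiv.Perm (Fin (m+1))) (hA : Adj π) :
    Fperm m (word π) = π := by
  apply Equiv.ext
  intro i
  apply Fin.val_injective
  rw [Fperm_val]
  set W := mkW m (word π) with hWdef
  have hWm : W m = true := mkW_m m (word π)
  have him : (i : ℕ) ≤ m := by omega
  have ht : eN m W (i : ℕ) ≤ m := eN_le m W him
  have hWt : W (eN m W (i : ℕ)) = true := eN_true m W hWm him
  have hp : (i : ℕ) ≤ eN m W (i : ℕ) := eN_ge m W (i : ℕ)
  have h := (FG_claim π hA (eN m W (i : ℕ)) ht hWt (i : ℕ) hp).1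
  rw [pval_eq π i.isLt] at h
  rw [show (⟨(i : ℕ), i.isLt⟩ : Fin (m+1)) = i from rfl] at h
  exact h.symm

/-- The bijection between boolean words and permutations with the
adjacency property. -/
def adjEquiv (m : ℕ) : (Fin m → Bool) ≃ {π : Equiv.Perm (Fin (m+1)) // Adj π} where
  toFun w := ⟨Fperm m w, Fperm_adj m w⟩
  invFun p := word p.1
  left_inv w := word_Fperm m w
  right_inv p := Subtype.ext (Fperm_word p.1 p.2)

end Av231312

open Av231312 in
theorem av231_312_card (n : ℕ) (hn : 1 ≤ n) :
    Nat.card {π : Equiv.Perm (Fin n) //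
        PermAvoids π ![2, 3, 1] ∧ PermAvoids π ![3, 1, 2]} =
      2 ^ (n - 1) := by
  obtain ⟨m, rfl⟩ : ∃ m, n = m + 1 := ⟨n - 1, by omega⟩
  have e1 : {π : Equiv.Perm (Fin (m+1)) //
      PermAvoids π ![2, 3, 1] ∧ PermAvoids π ![3, 1, 2]} ≃
      {π : Equiv.Perm (Fin (m+1)) // Adj π} :=
    Equiv.subtypeEquivRight
      (fun π => ⟨fun h => adj_of_avoids π h.1 h.2, fun h => avoids_of_adj π h⟩)
  rw [Nat.card_congr (e1.trans (adjEquiv m).symm)]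
  simp [Nat.card_eq_fintype_card]
end

section
/- For every natural number n, the number of permutations of length n avoiding all three patterns 123, 132 and 213 equals Fib(n+1), the (n+1)-st Fibonacci number. -/
open Equiv

def NearlyDecreasing {n : ℕ} {α : Type*} [LT α] (f : Fin n → α) : Prop :=
  ∀ i j : Fin n, (i : ℕ) + 2 ≤ j → f j < f i

section NearlyDecreasing

variable {n : ℕ} {α : Type*}

theorem nearlyDecreasing_cons_iff [LT α] {a : α} {f : Fin n → α} :
    NearlyDecreasing (Fin.cons a f : Fin (n + 1) → α) ↔
      (∀ j : Fin n, 0 < (j : ℕ) → f j < a) ∧ NearlyDecreasing f := by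
  refine ⟨fun h => ⟨fun j hj => h 0 j.succ (by simp; omega),
    fun i j hij => h i.succ j.succ (by simp; omega)⟩, ?_⟩
  rintro ⟨ha, hf⟩ i j hij
  induction j using Fin.cases with
  | zero => simp at hij
  | succ j =>
    induction i using Fin.cases with
    | zero => exact ha j (by simp at hij; omega)
    | succ i => exact hf i j (by simp at hij; omega)

theorem StrictMono.nearlyDecreasing_comp_iff {β : Type*} [LinearOrder α] [Preorder β]
    {g : α → β} (hg : StrictMono g) {f : Fin n → α} :
    NearlyDecreasing (g ∘ f) ↔ NearlyDecreasing f :=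
  forall₂_congr fun _ _ => imp_congr_right fun _ => hg.lt_iff_lt

end NearlyDecreasing

section PatternAvoidance

variable {n : ℕ} {π : Perm (Fin n)}

theorem NearlyDecreasing.permAvoids (hπ : NearlyDecreasing π) {p : Fin 3 → ℕ}
    (hp : p 0 < p 2) : PermAvoids π p := by
  rintro ⟨f, hf, hiso⟩
  have hgap : (f 0 : ℕ) + 2 ≤ f 2 := by
    have h01 : f 0 < f 1 := hf (by decide)
    have h12 : f 1 < f 2 := hf (by decide)
    omega
  exact (hπ _ _ hgap).asymm ((hiso 0 2).mp hp)

theorem permContains_of_lt_of_lt {p : Fin 3 → ℕ} {i m j : Fin n} (him : i < m) (hmj : m < j)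
    (hp : ∀ a b : Fin 3, p a < p b ↔ π (![i, m, j] a) < π (![i, m, j] b)) :
    PermContains π p :=
  ⟨![i, m, j], by simp [Fin.strictMono_iff_lt_succ, Fin.forall_fin_succ]; omega, hp⟩

theorem nearlyDecreasing_of_permAvoids (h123 : PermAvoids π ![1, 2, 3])
    (h132 : PermAvoids π ![1, 3, 2]) (h213 : PermAvoids π ![2, 1, 3]) :
    NearlyDecreasing π := by
  intro i j hij
  by_contra! hle
  have hlt : π i < π j := hle.lt_of_ne (π.injective.ne (by omega))
  set m : Fin n := ⟨i + 1, by omega⟩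
  have him : i < m := by simp [m, Fin.lt_def]
  have hmj : m < j := by simp [m, Fin.lt_def]; omega
  rcases lt_trichotomy (π m) (π i) with hm | hm | hm
  · exact h213 (permContains_of_lt_of_lt him hmj (by simp [Fin.forall_fin_succ]; omega))
  · exact him.ne (π.injective hm).symm
  rcases lt_trichotomy (π m) (π j) with hm' | hm' | hm'
  · exact h123 (permContains_of_lt_of_lt him hmj (by simp [Fin.forall_fin_succ]; omega))
  · exact hmj.ne (π.injective hm')
  · exact h132 (permContains_of_lt_of_lt him hmj (by simp [Fin.forall_fin_succ]; omega))

theorem permAvoids_123_132_213_iff :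
    (PermAvoids π ![1, 2, 3] ∧ PermAvoids π ![1, 3, 2] ∧ PermAvoids π ![2, 1, 3]) ↔
      NearlyDecreasing π :=
  ⟨fun ⟨h123, h132, h213⟩ => nearlyDecreasing_of_permAvoids h123 h132 h213, fun hπ =>
    ⟨hπ.permAvoids (by decide), hπ.permAvoids (by decide), hπ.permAvoids (by decide)⟩⟩

end PatternAvoidance

section Decomposition

variable {m : ℕ}

theorem Equiv.Perm.apply_eq_last_of_forall_lt (τ : Perm (Fin (m + 1))) {i : Fin (m + 1)}
    (h : ∀ j ≠ i, τ j < τ i) : τ i = Fin.last m := by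
  by_contra hi
  have hj : τ.symm (Fin.last m) ≠ i := fun hj => hi (by rw [← hj, apply_symm_apply])
  simpa using (h _ hj).trans_le (Fin.le_last _)

noncomputable def consMax (σ : Perm (Fin m)) : Perm (Fin (m + 1)) :=
  ofBijective (Fin.cons (Fin.last m) (Fin.castSucc ∘ σ)) <|
    Finite.injective_iff_bijective.mp <| Fin.cons_injective_iff.mpr
      ⟨by simp, (Fin.castSucc_injective m).comp σ.injective⟩

theorem coe_consMax (σ : Perm (Fin m)) :
    ⇑(consMax σ) = Fin.cons (Fin.last m) (Fin.castSucc ∘ σ) :=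
  rfl

@[simp]
theorem consMax_zero (σ : Perm (Fin m)) : consMax σ 0 = Fin.last m :=
  rfl

@[simp]
theorem consMax_succ (σ : Perm (Fin m)) (i : Fin m) : consMax σ i.succ = (σ i).castSucc :=
  rfl

theorem consMax_injective : Function.Injective (consMax (m := m)) := fun _ _ h =>
  Equiv.ext fun i => by simpa using DFunLike.congr_fun h i.succ

theorem exists_consMax_eq (π : Perm (Fin (m + 1))) (h : π 0 = Fin.last m) :
    ∃ σ : Perm (Fin m), consMax σ = π := by
  have hne (i : Fin m) : π i.succ ≠ Fin.last m := h ▸ π.injective.ne (Fin.succ_ne_zero i)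
  have hinj : Function.Injective fun i => (π i.succ).castPred (hne i) := fun i j hij =>
    Fin.succ_injective m (π.injective (Fin.castPred_inj.mp hij))
  refine ⟨ofBijective _ (Finite.injective_iff_bijective.mp hinj), Equiv.ext fun i => ?_⟩
  induction i using Fin.cases with
  | zero => exact h.symm
  | succ i => simp

/-- The permutation `m, m + 1, σ 0, σ 1, …`. -/
noncomputable def consMaxTwo (σ : Perm (Fin m)) : Perm (Fin (m + 2)) :=
  consMax (consMax σ) * swap 0 1

theorem coe_consMaxTwo (σ : Perm (Fin m)) :
    ⇑(consMaxTwo σ) =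
      Fin.cons (Fin.last m).castSucc
        (Fin.cons (Fin.last (m + 1)) (Fin.castSucc ∘ Fin.castSucc ∘ σ)) := by
  funext i
  induction i using Fin.cases with
  | zero => rfl
  | succ i =>
    induction i using Fin.cases with
    | zero => rfl
    | succ i =>
      simp [consMaxTwo, swap_apply_of_ne_of_ne (Fin.succ_ne_zero _) (Fin.succ_succ_ne_one i)]

theorem consMaxTwo_injective : Function.Injective (consMaxTwo (m := m)) := fun _ _ h =>
  consMax_injective (consMax_injective (mul_right_cancel h))

theorem consMax_ne_consMaxTwo (σ : Perm (Fin (m + 1))) (τ : Perm (Fin m)) :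
    consMax σ ≠ consMaxTwo τ := fun h => by
  simpa [coe_consMaxTwo, (Fin.castSucc_lt_last _).ne'] using congrArg (· 0) h

theorem nearlyDecreasing_consMax_iff {σ : Perm (Fin m)} :
    NearlyDecreasing (consMax σ) ↔ NearlyDecreasing σ := by
  rw [coe_consMax, nearlyDecreasing_cons_iff, Fin.strictMono_castSucc.nearlyDecreasing_comp_iff]
  simp [Fin.castSucc_lt_last]

theorem nearlyDecreasing_consMaxTwo_iff {σ : Perm (Fin m)} :
    NearlyDecreasing (consMaxTwo σ) ↔ NearlyDecreasing σ := by
  rw [coe_consMaxTwo, nearlyDecreasing_cons_iff, nearlyDecreasing_cons_iff,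
    Fin.strictMono_castSucc.nearlyDecreasing_comp_iff,
    Fin.strictMono_castSucc.nearlyDecreasing_comp_iff]
  refine ⟨fun h => h.2.2, fun h => ⟨fun j hj => ?_, fun j _ => ?_, h⟩⟩
  · obtain ⟨j, rfl⟩ := Fin.exists_succ_eq.mpr (Fin.ne_of_val_ne hj.ne')
    simp [Fin.castSucc_lt_last]
  · simp [Fin.castSucc_lt_last]

theorem NearlyDecreasing.apply_one_eq_last {π : Perm (Fin (m + 2))} (hπ : NearlyDecreasing π)
    (h0 : π 0 ≠ Fin.last (m + 1)) : π 1 = Fin.last (m + 1) := by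
  obtain ⟨x, hx⟩ : ∃ x, π x = Fin.last (m + 1) := ⟨_, π.apply_symm_apply _⟩
  have hx0 : x ≠ 0 := fun h => h0 (h ▸ hx)
  have hx2 : (x : ℕ) < 2 := by
    by_contra! hle
    exact (Fin.le_last (π 0)).not_gt (hx ▸ hπ 0 x (by simpa using hle))
  rwa [show x = 1 from Fin.ext (by rw [Fin.val_one]; have := Fin.pos_of_ne_zero hx0; omega)] at hx

theorem NearlyDecreasing.exists_consMax_eq_or_exists_consMaxTwo_eq {π : Perm (Fin (m + 2))}
    (hπ : NearlyDecreasing π) : (∃ σ, consMax σ = π) ∨ ∃ σ, consMaxTwo σ = π := by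
  by_cases h0 : π 0 = Fin.last (m + 1)
  · exact .inl (exists_consMax_eq π h0)
  -- Swapping the first two entries brings the maximum to the front; the old first entry then
  -- dominates everything behind it, so it is the maximum of the remaining permutation `τ`.
  obtain ⟨τ, hτ⟩ := exists_consMax_eq (π * swap 0 1) (by simp [hπ.apply_one_eq_last h0])
  have hτπ (j : Fin (m + 1)) : (τ j).castSucc = π (swap 0 1 j.succ) := by
    rw [← consMax_succ, hτ, Perm.mul_apply]
  have hτ0 : τ 0 = Fin.last m := Perm.apply_eq_last_of_forall_lt τ fun j hj => by
    obtain ⟨j, rfl⟩ := Fin.exists_succ_eq.mpr hj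
    rw [← Fin.castSucc_lt_castSucc_iff, hτπ, hτπ, swap_apply_of_ne_of_ne (Fin.succ_ne_zero _)
      (Fin.succ_succ_ne_one j), Fin.succ_zero_eq_one, swap_apply_right]
    exact hπ 0 _ (by simp)
  obtain ⟨σ, rfl⟩ := exists_consMax_eq τ hτ0
  exact .inr ⟨σ, by rw [consMaxTwo, hτ, mul_swap_mul_self]⟩

end Decomposition

theorem card_nearlyDecreasing_add_two (m : ℕ) :
    Nat.card {π : Perm (Fin (m + 2)) // NearlyDecreasing π} =
      Nat.card {σ : Perm (Fin (m + 1)) // NearlyDecreasing σ} +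
        Nat.card {σ : Perm (Fin m) // NearlyDecreasing σ} := by
  let F : {σ : Perm (Fin (m + 1)) // NearlyDecreasing σ} ⊕
      {σ : Perm (Fin m) // NearlyDecreasing σ} →
      {π : Perm (Fin (m + 2)) // NearlyDecreasing π} :=
    Sum.elim (Subtype.map consMax fun _ => nearlyDecreasing_consMax_iff.mpr)
      (Subtype.map consMaxTwo fun _ => nearlyDecreasing_consMaxTwo_iff.mpr)
  have hF : Function.Bijective F := by
    refine ⟨Function.Injective.sumElim (Subtype.map_injective _ consMax_injective)
      (Subtype.map_injective _ consMaxTwo_injective)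
      (fun σ τ h => consMax_ne_consMaxTwo σ τ (by simpa [Subtype.ext_iff] using h)), ?_⟩
    rintro ⟨π, hπ⟩
    rcases hπ.exists_consMax_eq_or_exists_consMaxTwo_eq with ⟨σ, rfl⟩ | ⟨σ, rfl⟩
    · exact ⟨.inl ⟨σ, nearlyDecreasing_consMax_iff.mp hπ⟩, rfl⟩
    · exact ⟨.inr ⟨σ, nearlyDecreasing_consMaxTwo_iff.mp hπ⟩, rfl⟩
  rw [← Nat.card_eq_of_bijective F hF, Nat.card_sum]

theorem card_nearlyDecreasing : ∀ n : ℕ,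
    Nat.card {π : Perm (Fin n) // NearlyDecreasing π} = Nat.fib (n + 1)
  | 0 => Nat.card_eq_one_iff_unique.mpr ⟨inferInstance, ⟨⟨1, fun i => i.elim0⟩⟩⟩
  | 1 => Nat.card_eq_one_iff_unique.mpr ⟨inferInstance, ⟨⟨1, fun _ j h => by omega⟩⟩⟩
  | n + 2 => by
    rw [card_nearlyDecreasing_add_two, card_nearlyDecreasing (n + 1), card_nearlyDecreasing n,
      Nat.fib_add_two (n := n + 1), add_comm]

theorem av123_132_213_card (n : ℕ) :
    Nat.card {π : Equiv.Perm (Fin n) //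
        PermAvoids π ![1, 2, 3] ∧ PermAvoids π ![1, 3, 2] ∧ PermAvoids π ![2, 1, 3]} =
      Nat.fib (n + 1) := by
  rw [Nat.card_congr (subtypeEquivRight fun _ => permAvoids_123_132_213_iff)]
  exact card_nearlyDecreasing n
end

section
/- Let a(n) denote the number of permutations of length n avoiding both patterns 321 and 1342. Then, as formal power series over ℚ, (1 − 5X + 9X² − 7X³ + 2X⁴) · ∑_{n≥0} a(n)·Xⁿ = 1 − 4X + 6X² − 3X³ + X⁴. -/
/-!
Sort the avoiders of length `m + 2` by their last value `v`. If `v` is `m` or `m + 1`, deleting it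
leaves an arbitrary avoider of length `m + 1`, since an occurrence of `321` or `1342` ending at `v`
needs two larger values before it. If `v < m`, let `P` and `Q` be the positions of `m` and `m + 1`.
Avoiding `321` through the last entry, `1342` at `i, P, Q, last` and `321` at `P, i, j` forces the
entries up to `P` to be the values above `v` in increasing order, and the others, except `m + 1`, to
be the values below `v` in increasing order; so the permutation is determined by `Q`, which can take
`v + 1` positions. Hence `a (m + 2) = 2 a (m + 1) + m (m + 1) / 2`, and as
`1 - 5X + 9X² - 7X³ + 2X⁴ = (1 - 2X) (1 - X) ^ 3`, the generating function follows because the third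
difference of a quadratic vanishes.
-/

open Equiv Finset

instance {n k : ℕ} (π : Perm (Fin n)) (p : Fin k → ℕ) : Decidable (PermContains π p) := by
  unfold PermContains; infer_instance

instance {n k : ℕ} (π : Perm (Fin n)) (p : Fin k → ℕ) : Decidable (PermAvoids π p) :=
  inferInstanceAs (Decidable ¬_)

theorem PermContains.length_le {n k : ℕ} {π : Perm (Fin n)} {p : Fin k → ℕ}
    (h : PermContains π p) : k ≤ n := by
  obtain ⟨f, hf, -⟩ := h
  simpa using Fintype.card_le_of_injective f hf.injective

theorem permContains_321_iff {n : ℕ} (π : Perm (Fin n)) :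
    PermContains π ![3, 2, 1] ↔ ∃ i j k, i < j ∧ j < k ∧ π k < π j ∧ π j < π i := by
  constructor
  · rintro ⟨f, hf, hfp⟩
    exact ⟨f 0, f 1, f 2, hf (by decide), hf (by decide),
      (hfp 2 1).1 (by decide), (hfp 1 0).1 (by decide)⟩
  · rintro ⟨i, j, k, hij, hjk, hkj, hji⟩
    refine ⟨![i, j, k], ?_, fun a b => ?_⟩
    · simp [Fin.strictMono_iff_lt_succ, Fin.forall_fin_succ, hij, hjk]
    · fin_cases a <;> fin_cases b <;> simp <;> omega

theorem permContains_1342_iff {n : ℕ} (π : Perm (Fin n)) :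
    PermContains π ![1, 3, 4, 2] ↔
      ∃ i j k l, i < j ∧ j < k ∧ k < l ∧ π i < π l ∧ π l < π j ∧ π j < π k := by
  constructor
  · rintro ⟨f, hf, hfp⟩
    exact ⟨f 0, f 1, f 2, f 3, hf (by decide), hf (by decide), hf (by decide),
      (hfp 0 3).1 (by decide), (hfp 3 1).1 (by decide), (hfp 1 2).1 (by decide)⟩
  · rintro ⟨i, j, k, l, hij, hjk, hkl, hil, hlj, hjk'⟩
    refine ⟨![i, j, k, l], ?_, fun a b => ?_⟩
    · simp [Fin.strictMono_iff_lt_succ, Fin.forall_fin_succ, hij, hjk, hkl]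
    · fin_cases a <;> fin_cases b <;> simp <;> omega

theorem Equiv.Perm.eq_of_inversions_iff {n : ℕ} {π τ : Perm (Fin n)}
    (h : ∀ i j, i < j → (π j < π i ↔ τ j < τ i)) : π = τ := by
  have hlt (i j : Fin n) : π i < π j ↔ τ i < τ j := by
    rcases lt_trichotomy i j with hij | rfl | hij
    · rw [← not_iff_not, not_lt, not_lt, le_iff_lt_or_eq, le_iff_lt_or_eq, h i j hij,
        π.injective.eq_iff, τ.injective.eq_iff]
    · simp
    · exact h j i hij
  have hmono : StrictMono (π ∘ τ.symm) := fun a b hab => by simpa [hlt] using hab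
  ext1 i
  simpa using hmono.apply_eq (x := τ i)

noncomputable def Equiv.Perm.appendLast {n : ℕ} (σ : Perm (Fin (n + 1))) (v : Fin (n + 2)) :
    Perm (Fin (n + 2)) :=
  Equiv.ofBijective (Fin.lastCases v (v.succAbove ∘ σ)) <| Finite.injective_iff_bijective.mp <| by
    intro a b h
    induction a using Fin.lastCases <;> induction b using Fin.lastCases <;>
      simp_all [Fin.succAbove_ne, (Fin.succAbove_ne _ _).symm]

section appendLast

variable {n : ℕ} (σ : Perm (Fin (n + 1))) (v : Fin (n + 2))

@[simp] theorem Equiv.Perm.appendLast_castSucc (i : Fin (n + 1)) :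
    σ.appendLast v i.castSucc = v.succAbove (σ i) := by
  simp [Perm.appendLast]

@[simp] theorem Equiv.Perm.appendLast_last : σ.appendLast v (Fin.last _) = v := by
  simp [Perm.appendLast]

theorem Equiv.Perm.appendLast_injective : Function.Injective (Perm.appendLast · v) := by
  intro σ τ h
  refine Equiv.ext fun i => ?_
  simpa using congr($h i.castSucc)

theorem Equiv.Perm.exists_appendLast_eq (π : Perm (Fin (n + 2))) :
    ∃ σ : Perm (Fin (n + 1)), σ.appendLast (π (Fin.last _)) = π := by
  let e : {x // x ≠ Fin.last (n + 1)} ≃ {y // y ≠ π (Fin.last _)} :=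
    π.subtypeEquiv fun x => π.injective.ne_iff.symm
  refine ⟨(finSuccAboveEquiv _).trans (e.trans (finSuccAboveEquiv _).symm), ?_⟩
  refine Equiv.ext fun i => ?_
  induction i using Fin.lastCases with
  | last => simp
  | cast i =>
    have hsuccAbove (y : {y // y ≠ π (Fin.last _)}) :
        (π (Fin.last _)).succAbove ((finSuccAboveEquiv _).symm y) = y := by
      simpa only [finSuccAboveEquiv_apply] using
        congr_arg Subtype.val ((finSuccAboveEquiv _).apply_symm_apply y)
    simp [hsuccAbove, e, finSuccAboveEquiv_apply]

theorem PermContains.appendLast {k : ℕ} {p : Fin k → ℕ} (h : PermContains σ p) :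
    PermContains (σ.appendLast v) p := by
  obtain ⟨f, hf, hfp⟩ := h
  exact ⟨Fin.castSucc ∘ f, Fin.strictMono_castSucc.comp hf, fun a b => by
    simp [hfp, Fin.succAbove_lt_succAbove_iff]⟩

theorem PermContains.of_appendLast {k : ℕ} {p : Fin (k + 1) → ℕ} (hv : n ≤ (v : ℕ))
    (hp : ∃ a b, a ≠ b ∧ p (Fin.last k) < p a ∧ p (Fin.last k) < p b)
    (h : PermContains (σ.appendLast v) p) : PermContains σ p := by
  obtain ⟨f, hf, hfp⟩ := h
  obtain ⟨a, b, hab, ha, hb⟩ := hp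
  have hlast : f (Fin.last k) ≠ Fin.last _ := by
    intro hl
    have h1 := (hfp _ _).1 ha
    have h2 := (hfp _ _).1 hb
    rw [hl, Perm.appendLast_last] at h1 h2
    have := (σ.appendLast v).injective.ne (hf.injective.ne hab)
    omega
  have hne_last (a : Fin (k + 1)) : f a ≠ Fin.last _ :=
    ((hf.monotone (Fin.le_last a)).trans_lt (Fin.lt_last_iff_ne_last.2 hlast)).ne
  choose g hg using fun a => Fin.exists_castSucc_eq.2 (hne_last a)
  refine ⟨g, fun a b hab => ?_, fun a b => ?_⟩
  · simpa [← hg] using hf hab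
  · simp [hfp, ← hg]

end appendLast

def Avoids321And1342 {n : ℕ} (π : Perm (Fin n)) : Prop :=
  PermAvoids π ![3, 2, 1] ∧ PermAvoids π ![1, 3, 4, 2]

instance {n : ℕ} : DecidablePred (Avoids321And1342 (n := n)) := fun _ =>
  inferInstanceAs (Decidable (_ ∧ _))

theorem avoids321And1342_iff {n : ℕ} (π : Perm (Fin n)) :
    Avoids321And1342 π ↔ (¬∃ i j k, i < j ∧ j < k ∧ π k < π j ∧ π j < π i) ∧
      ¬∃ i j k l, i < j ∧ j < k ∧ k < l ∧ π i < π l ∧ π l < π j ∧ π j < π k := by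
  rw [Avoids321And1342, PermAvoids, PermAvoids, permContains_321_iff, permContains_1342_iff]

theorem avoids321And1342_of_length_lt_three {n : ℕ} (hn : n < 3) (π : Perm (Fin n)) :
    Avoids321And1342 π :=
  ⟨fun h => by have := h.length_le; omega, fun h => by have := h.length_le; omega⟩

theorem avoids321And1342_appendLast_iff {n : ℕ} (σ : Perm (Fin (n + 1))) {v : Fin (n + 2)}
    (hv : n ≤ (v : ℕ)) : Avoids321And1342 (σ.appendLast v) ↔ Avoids321And1342 σ := by
  have h321 : PermContains (σ.appendLast v) ![3, 2, 1] ↔ PermContains σ ![3, 2, 1] :=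
    ⟨.of_appendLast σ v hv ⟨0, 1, by decide⟩, .appendLast σ v⟩
  have h1342 : PermContains (σ.appendLast v) ![1, 3, 4, 2] ↔ PermContains σ ![1, 3, 4, 2] :=
    ⟨.of_appendLast σ v hv ⟨1, 2, by decide⟩, .appendLast σ v⟩
  simp only [Avoids321And1342, PermAvoids, h321, h1342]

/-- In one-line notation, positions `0, …, m + 1` carry
`m-p, …, m, 0, …, q-p-2, m+1, q-p-1, …, m-p-2, m-p-1`. -/
def templateVal (m p q i : ℕ) : ℕ :=
  if i ≤ p then m - p + i
  else if i < q then i - p - 1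
  else if i = q then m + 1
  else if i ≤ m then i - p - 2
  else m - p - 1

noncomputable def template (m p q : ℕ) (hpq : p < q) (hqm : q ≤ m) : Perm (Fin (m + 2)) :=
  Equiv.ofBijective (fun i => ⟨templateVal m p q i, by unfold templateVal; split_ifs <;> omega⟩)
    (Finite.injective_iff_bijective.mp fun i j h => by
      have h' := congr_arg Fin.val h
      dsimp only at h'
      unfold templateVal at h'
      ext
      split_ifs at h' <;> omega)

theorem template_apply_val {m p q : ℕ} (hpq : p < q) (hqm : q ≤ m) (i : Fin (m + 2)) :
    (template m p q hpq hqm i : ℕ) = templateVal m p q i := rfl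

def HasTemplateInversions {n : ℕ} (π : Perm (Fin n)) (p q : ℕ) : Prop :=
  ∀ i j : Fin n, i < j → (π j < π i ↔ (i ≤ p ∧ p < j ∧ (j : ℕ) ≠ q) ∨ (i : ℕ) = q)

theorem hasTemplateInversions_template {m p q : ℕ} (hpq : p < q) (hqm : q ≤ m) :
    HasTemplateInversions (template m p q hpq hqm) p q := by
  intro i j hij
  rw [Fin.lt_def, template_apply_val, template_apply_val]
  unfold templateVal
  split_ifs <;> omega

theorem HasTemplateInversions.avoids321And1342 {n p q : ℕ} {π : Perm (Fin n)}
    (h : HasTemplateInversions π p q) (hpq : p < q) : Avoids321And1342 π := by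
  refine (avoids321And1342_iff π).2 ⟨?_, ?_⟩
  · rintro ⟨i, j, k, hij, hjk, hkj, hji⟩
    have := (h i j hij).1 hji
    have := (h j k hjk).1 hkj
    omega
  · rintro ⟨i, j, k, l, hij, hjk, hkl, hil, hlj, hjk'⟩
    have := (h j l (hjk.trans hkl)).1 hlj
    have := (h k l hkl).1 (hlj.trans hjk')
    have := (h i l (by omega)).not.1 hil.asymm
    omega

theorem exists_hasTemplateInversions {m : ℕ} {π : Perm (Fin (m + 2))}
    (hπ : Avoids321And1342 π) (hlast : (π (Fin.last _) : ℕ) < m) :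
    ∃ p q, p < q ∧ q ≤ m ∧ HasTemplateInversions π p q := by
  obtain ⟨no321, no1342⟩ := (avoids321And1342_iff π).1 hπ
  obtain ⟨P, hP⟩ := π.surjective ⟨m, by omega⟩
  obtain ⟨Q, hQ⟩ := π.surjective (Fin.last (m + 1))
  replace hP : (π P : ℕ) = m := by rw [hP]
  replace hQ : (π Q : ℕ) = m + 1 := by rw [hQ, Fin.val_last]
  have hne {i j} (h : (π i : ℕ) ≠ π j) : i ≠ j := fun hij => h (by rw [hij])
  have hPL : P < Fin.last _ := Fin.lt_last_iff_ne_last.2 (hne (by omega))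
  have hQL : Q < Fin.last _ := Fin.lt_last_iff_ne_last.2 (hne (by omega))
  have hPQ : P < Q := by
    by_contra! h
    exact no321 ⟨Q, P, Fin.last _, lt_of_le_of_ne h (hne (by omega)), hPL, by omega, by omega⟩
  have hA (i) (hi : i ≤ P) : π (Fin.last _) < π i := by
    by_contra! h
    have := π.injective.ne (hi.trans_lt hPL).ne
    exact no1342 ⟨i, P, Q, Fin.last _, lt_of_le_of_ne hi (hne (by omega)), hPQ, hQL,
      by omega, by omega, by omega⟩
  have hB (i) (hiQ : i ≠ Q) (hi : P < i) : π i ≤ π (Fin.last _) := by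
    by_contra! h
    have := π.injective.ne hiQ
    have := π.injective.ne hi.ne'
    exact no321 ⟨P, i, Fin.last _, hi, Fin.lt_last_iff_ne_last.2 (hne (by omega)), h, by omega⟩
  have hAmono (i j) (hij : i < j) (hj : j ≤ P) : π i < π j := by
    by_contra! h
    have := π.injective.ne hij.ne
    exact no321 ⟨i, j, Fin.last _, hij, hj.trans_lt hPL, hA j hj, by omega⟩
  have hBmono (i j) (hiQ : i ≠ Q) (hij : i < j) (hi : P < i) : π i < π j := by
    by_contra! h
    have := π.injective.ne hij.ne
    have := hB i hiQ hi
    exact no321 ⟨P, i, j, hi, hij, by omega, by omega⟩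
  refine ⟨P, Q, hPQ, by omega, fun i j hij => ?_⟩
  have := π.injective.ne hij.ne
  rcases eq_or_ne i Q with rfl | hiQ
  · omega
  rcases eq_or_ne j Q with rfl | hjQ
  · omega
  have := hA i; have := hA j; have := hB i hiQ; have := hB j hjQ
  have := hAmono i j hij; have := hBmono i j hiQ hij
  omega

theorem exists_eq_template {m : ℕ} {π : Perm (Fin (m + 2))}
    (hπ : Avoids321And1342 π) (hlast : (π (Fin.last _) : ℕ) < m) :
    ∃ p q, ∃ (hpq : p < q) (hqm : q ≤ m), π = template m p q hpq hqm := by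
  obtain ⟨p, q, hpq, hqm, h⟩ := exists_hasTemplateInversions hπ hlast
  exact ⟨p, q, hpq, hqm, Perm.eq_of_inversions_iff fun i j hij =>
    (h i j hij).trans (hasTemplateInversions_template hpq hqm i j hij).symm⟩

theorem card_avoids_last_of_lt {m : ℕ} (v : Fin (m + 2)) (hv : (v : ℕ) < m) :
    #{π | Avoids321And1342 π ∧ π (Fin.last _) = v} = v + 1 := by
  have hcard : #(Icc (m - v) m) = v + 1 := by simp; omega
  rw [← hcard]
  symm
  refine card_bij (fun q hq => template m (m - v - 1) q (by simp at hq; omega) (by simp at hq; omega))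
    ?_ ?_ ?_
  · intro q hq
    rw [mem_Icc] at hq
    simp only [mem_filter, mem_univ, true_and]
    refine ⟨(hasTemplateInversions_template _ _).avoids321And1342 (by omega), Fin.ext ?_⟩
    rw [template_apply_val]
    unfold templateVal
    simp only [Fin.val_last]
    split_ifs <;> omega
  · intro q hq q' hq' h
    rw [mem_Icc] at hq hq'
    have := congr_arg Fin.val (congr($h ⟨q, by omega⟩))
    simp only [template_apply_val] at this
    unfold templateVal at this
    split_ifs at this <;> omega
  · intro π hπ
    simp only [mem_filter, mem_univ, true_and] at hπ
    obtain ⟨hπ, rfl⟩ := hπ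
    obtain ⟨p, q, hpq, hqm, rfl⟩ := exists_eq_template hπ hv
    have hp : m - (template m p q hpq hqm (Fin.last _) : ℕ) - 1 = p := by
      rw [template_apply_val]
      unfold templateVal
      simp only [Fin.val_last]
      split_ifs <;> omega
    refine ⟨q, by rw [mem_Icc]; omega, ?_⟩
    congr 1

theorem card_avoids_last_of_le {m : ℕ} (v : Fin (m + 2)) (hv : m ≤ (v : ℕ)) :
    #{π | Avoids321And1342 π ∧ π (Fin.last _) = v} =
      #{σ : Perm (Fin (m + 1)) | Avoids321And1342 σ} := by
  symm
  refine card_bij (fun σ _ => σ.appendLast v) ?_ ?_ ?_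
  · intro σ hσ
    simp only [mem_filter, mem_univ, true_and] at hσ ⊢
    exact ⟨(avoids321And1342_appendLast_iff σ hv).2 hσ, Perm.appendLast_last σ v⟩
  · intro σ _ τ _ h
    exact Perm.appendLast_injective v h
  · intro π hπ
    simp only [mem_filter, mem_univ, true_and] at hπ
    obtain ⟨hπ, rfl⟩ := hπ
    obtain ⟨σ, hσ⟩ := Perm.exists_appendLast_eq π
    refine ⟨σ, ?_, hσ⟩
    simp only [mem_filter, mem_univ, true_and]
    rwa [← avoids321And1342_appendLast_iff σ hv, hσ]

theorem two_mul_card_avoids_add_two (m : ℕ) :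
    2 * #{π : Perm (Fin (m + 2)) | Avoids321And1342 π} =
      4 * #{σ : Perm (Fin (m + 1)) | Avoids321And1342 σ} + m * (m + 1) := by
  rw [card_eq_sum_card_fiberwise (f := fun π : Perm (Fin (m + 2)) => π (Fin.last _)) (t := univ)
    fun _ _ => mem_univ _]
  simp only [filter_filter]
  rw [Fin.sum_univ_castSucc, Fin.sum_univ_castSucc, card_avoids_last_of_le _ (by simp),
    card_avoids_last_of_le _ (by simp),
    sum_congr rfl fun v _ => card_avoids_last_of_lt (Fin.castSucc (Fin.castSucc v)) (by simp)]
  simp only [Fin.val_castSucc]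
  rw [Fin.sum_univ_eq_sum_range (fun i => i + 1) m]
  have gauss := sum_range_id_mul_two (m + 1)
  rw [sum_range_succ'] at gauss
  simp only [add_zero, add_tsub_cancel_right] at gauss
  linarith

theorem card_avoids_of_lt_three {n : ℕ} (hn : n < 3) :
    #{π : Perm (Fin n) | Avoids321And1342 π} = n.factorial := by
  rw [filter_true_of_mem fun π _ => avoids321And1342_of_length_lt_three hn π, card_univ,
    Fintype.card_perm, Fintype.card_fin]

open PowerSeries in
theorem mul_mk_eq_of_recurrence {a : ℕ → ℚ} (h0 : a 0 = 1) (h1 : a 1 = 1)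
    (hrec : ∀ n : ℕ, 2 * a (n + 2) = 4 * a (n + 1) + n * (n + 1)) :
    ((1 : PowerSeries ℚ) - 5 * X + 9 * X ^ 2 - 7 * X ^ 3 + 2 * X ^ 4) * PowerSeries.mk a =
      1 - 4 * X + 6 * X ^ 2 - 3 * X ^ 3 + X ^ 4 := by
  have r0 := hrec 0
  have r1 := hrec 1
  have r2 := hrec 2
  norm_num at r0 r1 r2
  ext n
  rcases n with _ | _ | _ | _ | _ | n <;>
    simp [← map_ofNat (C (R := ℚ)), sub_mul, add_mul, mul_assoc, coeff_X_pow_mul', coeff_X_pow,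
      coeff_one]
  · exact h0
  · linarith
  · linarith
  · linarith
  · linarith
  · linear_combination (norm := (push_cast; ring))
      (hrec (n + 3) - 3 * hrec (n + 2) + 3 * hrec (n + 1) - hrec n) / 2

open PowerSeries in
theorem av321_1342_gf :
    ((1 : PowerSeries ℚ) - 5 * X + 9 * X ^ 2 - 7 * X ^ 3 + 2 * X ^ 4) *
      PowerSeries.mk (fun n =>
        (Nat.card {π : Equiv.Perm (Fin n) //
            PermAvoids π ![3, 2, 1] ∧ PermAvoids π ![1, 3, 4, 2]} : ℚ)) =
      1 - 4 * X + 6 * X ^ 2 - 3 * X ^ 3 + X ^ 4 := by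
  have hcard (n : ℕ) : Nat.card {π : Perm (Fin n) //
      PermAvoids π ![3, 2, 1] ∧ PermAvoids π ![1, 3, 4, 2]} =
      #{π : Perm (Fin n) | Avoids321And1342 π} := by
    rw [Nat.card_eq_fintype_card, ← Fintype.card_subtype]
    rfl
  simp only [hcard]
  refine mul_mk_eq_of_recurrence ?_ ?_ fun n => ?_
  · rw [card_avoids_of_lt_three (by norm_num)]; rfl
  · rw [card_avoids_of_lt_three (by norm_num)]; rfl
  · exact_mod_cast two_mul_card_avoids_add_two n
end

section
/- Let B be the set of 19 patterns {1234, 1243, 1324, 1342, 1423, 1432, 2134, 2143, 2314, 2341, 2413, 2431, 3124, 3142, 3214, 3241, 4123, 4132, 4213}. For every natural number n ≥ 4, a permutation of length n avoids every pattern in B if and only if it avoids all three patterns 123, 132 and 213; consequently the number of permutations of length n avoiding every pattern in B equals Fib(n+1) for all n ≥ 4. -/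
set_option maxRecDepth 100000

/-! ### Auxiliary order conditions -/

/-- `π` is "almost decreasing": later values exceed earlier ones by at most 1. -/
def CondD {n : ℕ} (π : Equiv.Perm (Fin n)) : Prop :=
  ∀ s t : Fin n, s < t → (π t : ℕ) ≤ (π s : ℕ) + 1

def CondC {n : ℕ} (π : Equiv.Perm (Fin n)) : Prop :=
  ∀ i : Fin n, n ≤ (π i : ℕ) + (i : ℕ) + 2 ∧ (π i : ℕ) + (i : ℕ) ≤ n

def CondE {m : ℕ} (σ : Equiv.Perm (Fin m)) : Prop :=
  ∀ i : Fin m, (σ i : ℕ) ≤ (i : ℕ) + 1 ∧ (i : ℕ) ≤ (σ i : ℕ) + 1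

lemma condC_of_condD {n : ℕ} {π : Equiv.Perm (Fin n)} (hD : CondD π) : CondC π := by
  intro i
  constructor
  · by_contra h
    push_neg at h
    have hb : (π i : ℕ) + 1 < n := by omega
    have hsub : ∀ t : Fin n, t ∈ Finset.Ici i → π t ∈ Finset.Iic (⟨(π i : ℕ) + 1, hb⟩ : Fin n) := by
      intro t ht
      simp only [Finset.mem_Ici] at ht
      simp only [Finset.mem_Iic]
      rcases eq_or_lt_of_le ht with rfl | hlt
      · exact Fin.le_def.2 (by simp)
      · exact Fin.le_def.2 (by simpa using hD i t hlt)
    have hcard := Finset.card_le_card_of_injOn _ hsub (fun a _ b _ hab => π.injective hab)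
    rw [Fin.card_Ici, Fin.card_Iic] at hcard
    simp at hcard
    omega
  · by_contra h
    push_neg at h
    have ha : (π i : ℕ) - 1 < n := by have := (π i).isLt; omega
    have hsub : ∀ s : Fin n, s ∈ Finset.Iic i → π s ∈ Finset.Ici (⟨(π i : ℕ) - 1, ha⟩ : Fin n) := by
      intro s hs
      simp only [Finset.mem_Iic] at hs
      simp only [Finset.mem_Ici]
      rcases eq_or_lt_of_le hs with rfl | hlt
      · exact Fin.le_def.2 (by simp)
      · have := hD s i hlt
        exact Fin.le_def.2 (by simp; omega)
    have hcard := Finset.card_le_card_of_injOn _ hsub (fun a _ b _ hab => π.injective hab)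
    rw [Fin.card_Iic, Fin.card_Ici] at hcard
    simp at hcard
    have := (π i).isLt
    have := i.isLt
    omega

lemma condD_of_condC {n : ℕ} {π : Equiv.Perm (Fin n)} (hC : CondC π) : CondD π := by
  intro s t hst
  by_contra h
  push_neg at h
  have h1 := (hC s).1
  have h2 := (hC t).2
  have hst' : (s : ℕ) < t := hst
  omega

/-! ### Avoidance from `CondD` -/

lemma avoid_of_condD {n k : ℕ} {π : Equiv.Perm (Fin n)} (hD : CondD π) (p : Fin k → ℕ)
    (x y z : Fin k) (hxy : x < y) (hyz : y < z)
    (hp : (p x < p y ∧ p y < p z) ∨ (p x < p z ∧ p z < p y) ∨ (p y < p x ∧ p x < p z)) :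
    PermAvoids π p := by
  rintro ⟨f, hf, hiff⟩
  have lt_iff : ∀ a b, p a < p b ↔ ((π (f a)) : ℕ) < ((π (f b)) : ℕ) :=
    fun a b => (hiff a b).trans Fin.lt_def
  rcases hp with ⟨h1, h2⟩ | ⟨h1, h2⟩ | ⟨h1, h2⟩
  · have a1 := (lt_iff _ _).1 h1
    have a2 := (lt_iff _ _).1 h2
    have := hD (f x) (f z) (hf (hxy.trans hyz)); omega
  · have a1 := (lt_iff _ _).1 h1
    have a2 := (lt_iff _ _).1 h2
    have := hD (f x) (f y) (hf hxy); omega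
  · have a1 := (lt_iff _ _).1 h1
    have a2 := (lt_iff _ _).1 h2
    have := hD (f y) (f z) (hf hyz); omega

lemma strictMono_vec3 {n : ℕ} {a b c : Fin n} (hab : a < b) (hbc : b < c) :
    StrictMono ![a, b, c] := by
  intro x y hxy
  fin_cases x <;> fin_cases y <;> simp_all <;> first | exact hab | exact hbc | exact hab.trans hbc

lemma exists_triple_of_not_condD {n : ℕ} {π : Equiv.Perm (Fin n)} (h : ¬ CondD π) :
    ∃ a b c : Fin n, a < b ∧ b < c ∧
      (((π a : ℕ) < π b ∧ (π b : ℕ) < π c) ∨ ((π a : ℕ) < π c ∧ (π c : ℕ) < π b) ∨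
        ((π b : ℕ) < π a ∧ (π a : ℕ) < π c)) := by
  simp only [CondD, not_forall] at h
  obtain ⟨s, t, hst, hgt⟩ := h
  push_neg at hgt
  have hv : (π s : ℕ) + 1 < n := lt_of_le_of_lt (by omega) (π t).isLt
  set v : Fin n := ⟨(π s : ℕ) + 1, hv⟩ with hvdef
  set u : Fin n := π.symm v with hu
  have hπu : π u = v := π.apply_symm_apply v
  have hus : u ≠ s := by
    intro he; rw [he] at hπu
    have h2 : ((π s : Fin n) : ℕ) = (v : ℕ) := congrArg Fin.val hπu
    simp [hvdef] at h2
  have hut : u ≠ t := by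
    intro he; rw [he] at hπu
    have h2 : ((π t : Fin n) : ℕ) = (v : ℕ) := congrArg Fin.val hπu
    simp [hvdef] at h2
    omega
  have hπuval : (π u : ℕ) = (π s : ℕ) + 1 := by rw [hπu]
  rcases lt_or_gt_of_ne hus with h1 | h1
  · exact ⟨u, s, t, h1, hst, Or.inr (Or.inr ⟨by omega, by omega⟩)⟩
  · rcases lt_or_gt_of_ne hut with h2 | h2
    · exact ⟨s, u, t, h1, h2, Or.inl ⟨by omega, by omega⟩⟩
    · exact ⟨s, t, u, hst, h2, Or.inr (Or.inl ⟨by omega, by omega⟩)⟩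

lemma contains_of_vec3 {n : ℕ} {π : Equiv.Perm (Fin n)} {a b c : Fin n} (hab : a < b)
    (hbc : b < c) (q : Fin 3 → ℕ)
    (h : ∀ x y : Fin 3, q x < q y ↔ (π (![a, b, c] x) : ℕ) < (π (![a, b, c] y) : ℕ)) :
    PermContains π q :=
  ⟨![a, b, c], strictMono_vec3 hab hbc, fun x y => (h x y).trans Fin.lt_def.symm⟩

/-! ### Rank of a 4-tuple -/

def rk {m : ℕ} {α : Type*} [LinearOrder α] (w : Fin m → α) (i : Fin m) : ℕ :=
  (Finset.univ.filter fun j => w j < w i).card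

lemma rk_lt {m : ℕ} {α : Type*} [LinearOrder α] (w : Fin m → α) (i : Fin m) : rk w i < m := by
  have h : (Finset.univ.filter fun j => w j < w i) ⊆ Finset.univ.erase i := by
    intro x hx
    simp only [Finset.mem_filter] at hx
    exact Finset.mem_erase.2 ⟨fun he => by simp [he] at hx, Finset.mem_univ x⟩
  calc rk w i ≤ (Finset.univ.erase i).card := Finset.card_le_card h
    _ < Finset.univ.card := Finset.card_erase_lt_of_mem (Finset.mem_univ i)
    _ = m := by simp

lemma rk_strict {m : ℕ} {α : Type*} [LinearOrder α] {w : Fin m → α} {i j : Fin m}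
    (h : w i < w j) : rk w i < rk w j := by
  apply Finset.card_lt_card
  constructor
  · intro x hx
    simp only [Finset.mem_filter, Finset.mem_univ, true_and] at hx ⊢
    exact hx.trans h
  · intro hsub
    have hi : i ∈ Finset.univ.filter fun x => w x < w j := by simp [h]
    have := hsub hi
    simp at this

lemma rk_iff {m : ℕ} {α : Type*} [LinearOrder α] {w : Fin m → α} (hw : Function.Injective w)
    (i j : Fin m) : w i < w j ↔ rk w i < rk w j := by
  constructor
  · exact rk_strict
  · intro h
    rcases lt_trichotomy (w i) (w j) with h1 | h1 | h1
    · exact h1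
    · exact absurd (hw h1) (by rintro rfl; exact lt_irrefl _ h)
    · exact absurd (rk_strict h1) (by omega)

/-! ### The decidable core lemma -/

set_option synthInstance.maxSize 4000 in
set_option synthInstance.maxHeartbeats 1000000 in
set_option maxHeartbeats 4000000 in
lemma key19 : ∀ r : Fin 4 → Fin 4, (∀ i j : Fin 4, r i = r j → i = j) →
    ∀ x y z : Fin 4, x < y → y < z →
    ((r x < r y ∧ r y < r z) ∨ (r x < r z ∧ r z < r y) ∨ (r y < r x ∧ r x < r z)) →
    ((∀ a b : Fin 4, (![1,2,3,4] : Fin 4 → ℕ) a < ![1,2,3,4] b ↔ r a < r b) ∨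
     (∀ a b : Fin 4, (![1,2,4,3] : Fin 4 → ℕ) a < ![1,2,4,3] b ↔ r a < r b) ∨
     (∀ a b : Fin 4, (![1,3,2,4] : Fin 4 → ℕ) a < ![1,3,2,4] b ↔ r a < r b) ∨
     (∀ a b : Fin 4, (![1,3,4,2] : Fin 4 → ℕ) a < ![1,3,4,2] b ↔ r a < r b) ∨
     (∀ a b : Fin 4, (![1,4,2,3] : Fin 4 → ℕ) a < ![1,4,2,3] b ↔ r a < r b) ∨
     (∀ a b : Fin 4, (![1,4,3,2] : Fin 4 → ℕ) a < ![1,4,3,2] b ↔ r a < r b) ∨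
     (∀ a b : Fin 4, (![2,1,3,4] : Fin 4 → ℕ) a < ![2,1,3,4] b ↔ r a < r b) ∨
     (∀ a b : Fin 4, (![2,1,4,3] : Fin 4 → ℕ) a < ![2,1,4,3] b ↔ r a < r b) ∨
     (∀ a b : Fin 4, (![2,3,1,4] : Fin 4 → ℕ) a < ![2,3,1,4] b ↔ r a < r b) ∨
     (∀ a b : Fin 4, (![2,3,4,1] : Fin 4 → ℕ) a < ![2,3,4,1] b ↔ r a < r b) ∨
     (∀ a b : Fin 4, (![2,4,1,3] : Fin 4 → ℕ) a < ![2,4,1,3] b ↔ r a < r b) ∨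
     (∀ a b : Fin 4, (![2,4,3,1] : Fin 4 → ℕ) a < ![2,4,3,1] b ↔ r a < r b) ∨
     (∀ a b : Fin 4, (![3,1,2,4] : Fin 4 → ℕ) a < ![3,1,2,4] b ↔ r a < r b) ∨
     (∀ a b : Fin 4, (![3,1,4,2] : Fin 4 → ℕ) a < ![3,1,4,2] b ↔ r a < r b) ∨
     (∀ a b : Fin 4, (![3,2,1,4] : Fin 4 → ℕ) a < ![3,2,1,4] b ↔ r a < r b) ∨
     (∀ a b : Fin 4, (![3,2,4,1] : Fin 4 → ℕ) a < ![3,2,4,1] b ↔ r a < r b) ∨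
     (∀ a b : Fin 4, (![4,1,2,3] : Fin 4 → ℕ) a < ![4,1,2,3] b ↔ r a < r b) ∨
     (∀ a b : Fin 4, (![4,1,3,2] : Fin 4 → ℕ) a < ![4,1,3,2] b ↔ r a < r b) ∨
     (∀ a b : Fin 4, (![4,2,1,3] : Fin 4 → ℕ) a < ![4,2,1,3] b ↔ r a < r b)) := by
  decide

/-! ### Embedding four points -/

lemma exists_embed4 {n : ℕ} (hn : 4 ≤ n) {a b c : Fin n} (hab : a < b) (hbc : b < c) :
    ∃ (g : Fin 4 → Fin n) (x y z : Fin 4), StrictMono g ∧ x < y ∧ y < z ∧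
      g x = a ∧ g y = b ∧ g z = c := by
  have hac : a < c := hab.trans hbc
  have hbcmem : b ∉ ({c} : Finset (Fin n)) := by simp [hbc.ne]
  have habcmem : a ∉ ({b, c} : Finset (Fin n)) := by simp [hab.ne, hac.ne]
  have hcard3 : ({a, b, c} : Finset (Fin n)).card = 3 := by
    rw [Finset.card_insert_of_notMem habcmem, Finset.card_insert_of_notMem hbcmem,
      Finset.card_singleton]
  obtain ⟨d, hd⟩ : ∃ d : Fin n, d ∉ ({a, b, c} : Finset (Fin n)) := by
    by_contra hall
    push_neg at hall
    have h1 : (Finset.univ : Finset (Fin n)).card ≤ ({a, b, c} : Finset (Fin n)).card :=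
      Finset.card_le_card fun x _ => hall x
    rw [hcard3] at h1
    simp at h1
    omega
  have hcard : (insert d {a, b, c} : Finset (Fin n)).card = 4 := by
    rw [Finset.card_insert_of_notMem hd, hcard3]
  set s : Finset (Fin n) := insert d {a, b, c} with hs
  let e := s.orderIsoOfFin hcard
  have hma : a ∈ s := by simp [hs]
  have hmb : b ∈ s := by simp [hs]
  have hmc : c ∈ s := by simp [hs]
  refine ⟨fun i => (e i : Fin n), e.symm ⟨a, hma⟩, e.symm ⟨b, hmb⟩, e.symm ⟨c, hmc⟩,
    fun i j hij => ?_, ?_, ?_, ?_, ?_, ?_⟩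
  · exact Subtype.coe_lt_coe.2 (e.strictMono hij)
  · exact e.symm.strictMono (Subtype.mk_lt_mk.2 hab)
  · exact e.symm.strictMono (Subtype.mk_lt_mk.2 hbc)
  · exact congrArg Subtype.val (e.apply_symm_apply ⟨a, hma⟩)
  · exact congrArg Subtype.val (e.apply_symm_apply ⟨b, hmb⟩)
  · exact congrArg Subtype.val (e.apply_symm_apply ⟨c, hmc⟩)

/-! ### `CondD` from avoidance of the 19 patterns -/

lemma condD_of_avoid19 {n : ℕ} (hn : 4 ≤ n) {π : Equiv.Perm (Fin n)}
    (H : PermAvoids π ![1, 2, 3, 4] ∧ PermAvoids π ![1, 2, 4, 3] ∧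
       PermAvoids π ![1, 3, 2, 4] ∧ PermAvoids π ![1, 3, 4, 2] ∧
       PermAvoids π ![1, 4, 2, 3] ∧ PermAvoids π ![1, 4, 3, 2] ∧
       PermAvoids π ![2, 1, 3, 4] ∧ PermAvoids π ![2, 1, 4, 3] ∧
       PermAvoids π ![2, 3, 1, 4] ∧ PermAvoids π ![2, 3, 4, 1] ∧
       PermAvoids π ![2, 4, 1, 3] ∧ PermAvoids π ![2, 4, 3, 1] ∧
       PermAvoids π ![3, 1, 2, 4] ∧ PermAvoids π ![3, 1, 4, 2] ∧
       PermAvoids π ![3, 2, 1, 4] ∧ PermAvoids π ![3, 2, 4, 1] ∧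
       PermAvoids π ![4, 1, 2, 3] ∧ PermAvoids π ![4, 1, 3, 2] ∧
       PermAvoids π ![4, 2, 1, 3]) : CondD π := by
  obtain ⟨H1, H2, H3, H4, H5, H6, H7, H8, H9, H10, H11, H12, H13, H14, H15, H16, H17, H18,
    H19⟩ := H
  by_contra hD
  obtain ⟨a, b, c, hab, hbc, ht⟩ := exists_triple_of_not_condD hD
  obtain ⟨g, x, y, z, hg, hxy, hyz, hgx, hgy, hgz⟩ := exists_embed4 hn hab hbc
  have hwinj : Function.Injective (fun i => π (g i)) := fun i j hij =>
    hg.injective (π.injective hij)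
  set r : Fin 4 → Fin 4 := fun i => ⟨rk (fun t => π (g t)) i, rk_lt _ i⟩ with hrdef
  have hrw : ∀ i j : Fin 4, r i < r j ↔ (π (g i) : ℕ) < (π (g j) : ℕ) := by
    intro i j
    have h1 : r i < r j ↔ rk (fun t => π (g t)) i < rk (fun t => π (g t)) j := Iff.rfl
    rw [h1, ← rk_iff hwinj i j]
    exact Fin.lt_def
  have hrinj : ∀ i j : Fin 4, r i = r j → i = j := by
    intro i j hij
    by_contra hne
    have hwne : (fun t => π (g t)) i ≠ (fun t => π (g t)) j := fun he => hne (hwinj he)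
    have hval : rk (fun t => π (g t)) i = rk (fun t => π (g t)) j := congrArg Fin.val hij
    rcases hwne.lt_or_gt with hlt | hlt
    · have := rk_strict (w := fun t => π (g t)) (i := i) (j := j) hlt; omega
    · have := rk_strict (w := fun t => π (g t)) (i := j) (j := i) hlt; omega
  have e1 := hrw x y; rw [hgx, hgy] at e1
  have e2 := hrw y z; rw [hgy, hgz] at e2
  have e3 := hrw x z; rw [hgx, hgz] at e3
  have e4 := hrw z y; rw [hgz, hgy] at e4
  have e5 := hrw y x; rw [hgy, hgx] at e5
  have hdis : (r x < r y ∧ r y < r z) ∨ (r x < r z ∧ r z < r y) ∨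
      (r y < r x ∧ r x < r z) := by
    rcases ht with ⟨u1, u2⟩ | ⟨u1, u2⟩ | ⟨u1, u2⟩
    · exact Or.inl ⟨e1.2 u1, e2.2 u2⟩
    · exact Or.inr (Or.inl ⟨e3.2 u1, e4.2 u2⟩)
    · exact Or.inr (Or.inr ⟨e5.2 u1, e3.2 u2⟩)
  have F : ∀ {p : Fin 4 → ℕ}, (∀ i j : Fin 4, p i < p j ↔ r i < r j) → PermContains π p :=
    fun {p} h => ⟨g, hg, fun i j => (h i j).trans ((hrw i j).trans Fin.lt_def.symm)⟩
  rcases key19 r hrinj x y z hxy hyz hdis with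
    h | h | h | h | h | h | h | h | h | h | h | h | h | h | h | h | h | h | h
  exacts [H1 (F h), H2 (F h), H3 (F h), H4 (F h), H5 (F h), H6 (F h), H7 (F h), H8 (F h),
    H9 (F h), H10 (F h), H11 (F h), H12 (F h), H13 (F h), H14 (F h), H15 (F h), H16 (F h),
    H17 (F h), H18 (F h), H19 (F h)]

/-! ### The 19 avoidances from `CondD` -/

lemma avoid19_of_condD {n : ℕ} {π : Equiv.Perm (Fin n)} (hD : CondD π) :
    PermAvoids π ![1, 2, 3, 4] ∧ PermAvoids π ![1, 2, 4, 3] ∧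
       PermAvoids π ![1, 3, 2, 4] ∧ PermAvoids π ![1, 3, 4, 2] ∧
       PermAvoids π ![1, 4, 2, 3] ∧ PermAvoids π ![1, 4, 3, 2] ∧
       PermAvoids π ![2, 1, 3, 4] ∧ PermAvoids π ![2, 1, 4, 3] ∧
       PermAvoids π ![2, 3, 1, 4] ∧ PermAvoids π ![2, 3, 4, 1] ∧
       PermAvoids π ![2, 4, 1, 3] ∧ PermAvoids π ![2, 4, 3, 1] ∧
       PermAvoids π ![3, 1, 2, 4] ∧ PermAvoids π ![3, 1, 4, 2] ∧
       PermAvoids π ![3, 2, 1, 4] ∧ PermAvoids π ![3, 2, 4, 1] ∧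
       PermAvoids π ![4, 1, 2, 3] ∧ PermAvoids π ![4, 1, 3, 2] ∧
       PermAvoids π ![4, 2, 1, 3] :=
  ⟨avoid_of_condD hD _ 0 1 2 (by decide) (by decide) (by decide),
   avoid_of_condD hD _ 0 1 2 (by decide) (by decide) (by decide),
   avoid_of_condD hD _ 0 1 2 (by decide) (by decide) (by decide),
   avoid_of_condD hD _ 0 1 2 (by decide) (by decide) (by decide),
   avoid_of_condD hD _ 0 1 2 (by decide) (by decide) (by decide),
   avoid_of_condD hD _ 0 1 2 (by decide) (by decide) (by decide),
   avoid_of_condD hD _ 0 1 2 (by decide) (by decide) (by decide),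
   avoid_of_condD hD _ 0 1 3 (by decide) (by decide) (by decide),
   avoid_of_condD hD _ 0 1 3 (by decide) (by decide) (by decide),
   avoid_of_condD hD _ 0 1 2 (by decide) (by decide) (by decide),
   avoid_of_condD hD _ 0 1 3 (by decide) (by decide) (by decide),
   avoid_of_condD hD _ 0 1 2 (by decide) (by decide) (by decide),
   avoid_of_condD hD _ 1 2 3 (by decide) (by decide) (by decide),
   avoid_of_condD hD _ 1 2 3 (by decide) (by decide) (by decide),
   avoid_of_condD hD _ 1 2 3 (by decide) (by decide) (by decide),
   avoid_of_condD hD _ 0 1 2 (by decide) (by decide) (by decide),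
   avoid_of_condD hD _ 1 2 3 (by decide) (by decide) (by decide),
   avoid_of_condD hD _ 1 2 3 (by decide) (by decide) (by decide),
   avoid_of_condD hD _ 1 2 3 (by decide) (by decide) (by decide)⟩

/-! ### `CondD` from avoidance of the three length-3 patterns -/

lemma condD_of_avoid3 {n : ℕ} {π : Equiv.Perm (Fin n)}
    (h123 : PermAvoids π ![1, 2, 3]) (h132 : PermAvoids π ![1, 3, 2])
    (h213 : PermAvoids π ![2, 1, 3]) : CondD π := by
  by_contra hD
  obtain ⟨a, b, c, hab, hbc, ht⟩ := exists_triple_of_not_condD hD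
  rcases ht with ⟨u1, u2⟩ | ⟨u1, u2⟩ | ⟨u1, u2⟩
  · exact h123 (contains_of_vec3 hab hbc _ (by
      intro x y; fin_cases x <;> fin_cases y <;> simp <;> omega))
  · exact h132 (contains_of_vec3 hab hbc _ (by
      intro x y; fin_cases x <;> fin_cases y <;> simp <;> omega))
  · exact h213 (contains_of_vec3 hab hbc _ (by
      intro x y; fin_cases x <;> fin_cases y <;> simp <;> omega))

/-! ### Counting: the recursion for `CondE` -/

open Equiv Equiv.Perm in
lemma condE_L {m : ℕ} {e : Perm (Fin (m + 1))} (he : CondE e) :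
    CondE (decomposeFin.symm (0, e)) := by
  intro i
  induction i using Fin.cases with
  | zero => simp
  | succ j =>
    rw [decomposeFin_symm_apply_succ, Equiv.swap_self]
    have := he j
    simp only [Equiv.refl_apply, Fin.val_succ]
    omega

open Equiv Equiv.Perm in
lemma condE_R {m : ℕ} {e : Perm (Fin m)} (he : CondE e) :
    CondE (decomposeFin.symm (1, decomposeFin.symm (0, e))) := by
  intro i
  induction i using Fin.cases with
  | zero => simp
  | succ j =>
    rw [decomposeFin_symm_apply_succ]
    induction j using Fin.cases with
    | zero =>
      rw [decomposeFin_symm_apply_zero]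
      simp
    | succ k =>
      rw [decomposeFin_symm_apply_succ, Equiv.swap_self]
      simp only [Equiv.refl_apply]
      rw [Equiv.swap_apply_of_ne_of_ne (Fin.succ_ne_zero _)
        (fun h => Fin.succ_ne_zero _ (Fin.succ_injective _ (h.trans Fin.succ_zero_eq_one.symm)))]
      have := he k
      simp only [Fin.val_succ]
      omega

open Equiv Equiv.Perm in
def stepMap (m : ℕ) :
    {σ : Equiv.Perm (Fin (m + 1)) // CondE σ} ⊕ {σ : Equiv.Perm (Fin m) // CondE σ} →
      {σ : Equiv.Perm (Fin (m + 2)) // CondE σ} :=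
  Sum.elim (fun e => ⟨decomposeFin.symm (0, e.1), condE_L e.2⟩)
    (fun e => ⟨decomposeFin.symm (1, decomposeFin.symm (0, e.1)), condE_R e.2⟩)

open Equiv Equiv.Perm in
lemma stepMap_bijective (m : ℕ) : Function.Bijective (stepMap m) := by
  constructor
  · rintro (⟨e, he⟩ | ⟨e, he⟩) (⟨f, hf⟩ | ⟨f, hf⟩) h <;>
      simp only [stepMap, Sum.elim_inl, Sum.elim_inr, Subtype.mk.injEq] at h
    · have h1 := (Equiv.injective _ h)
      rw [Prod.mk.injEq] at h1
      obtain ⟨-, rfl⟩ := h1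
      rfl
    · have := congrArg (fun σ : Equiv.Perm (Fin (m + 2)) => σ 0) h
      simp at this
    · have := congrArg (fun σ : Equiv.Perm (Fin (m + 2)) => σ 0) h
      simp at this
    · have h1 := (Equiv.injective _ h)
      rw [Prod.mk.injEq] at h1
      have h2 := (Equiv.injective _ h1.2)
      rw [Prod.mk.injEq] at h2
      obtain ⟨-, rfl⟩ := h2
      rfl
  · rintro ⟨σ, hσ⟩
    obtain ⟨p, e, rfl⟩ : ∃ p e, σ = decomposeFin.symm (p, e) :=
      ⟨(decomposeFin σ).1, (decomposeFin σ).2, by simp⟩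
    have hp : (p : ℕ) ≤ 1 := by
      have := (hσ 0).1
      rwa [decomposeFin_symm_apply_zero, Fin.val_zero, Nat.zero_add] at this
    have hp2 : p = 0 ∨ p = 1 := by
      rcases Nat.le_one_iff_eq_zero_or_eq_one.1 hp with h | h
      · exact Or.inl (Fin.ext (by simp [h]))
      · exact Or.inr (Fin.ext (by simp [h]))
    rcases hp2 with rfl | rfl
    · have he : CondE e := by
        intro j
        have := hσ j.succ
        rw [decomposeFin_symm_apply_succ, Equiv.swap_self] at this
        simp only [Equiv.refl_apply, Fin.val_succ] at this
        omega
      exact ⟨Sum.inl ⟨e, he⟩, rfl⟩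
    · have hσ1 : decomposeFin.symm (1, e) 1 = 0 := by
        set j : Fin (m + 2) := (decomposeFin.symm (1, e)).symm 0 with hj
        have hj0 : decomposeFin.symm (1, e) j = 0 := Equiv.apply_symm_apply _ 0
        have hjne : j ≠ 0 := by
          intro h
          rw [h, decomposeFin_symm_apply_zero] at hj0
          exact one_ne_zero hj0
        have hjle : (j : ℕ) ≤ 1 := by
          have := (hσ j).2
          rw [hj0] at this
          simpa using this
        have hj1 : j = 1 := by
          apply Fin.ext
          have := Fin.pos_iff_ne_zero.2 hjne
          simp only [Fin.val_one]
          omega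
        rw [hj1] at hj0
        exact hj0
      have he0 : e 0 = 0 := by
        rw [decomposeFin_symm_apply_one] at hσ1
        have h2 : (e 0).succ = Equiv.swap (0 : Fin (m + 2)) 1 0 := by
          have := congrArg (Equiv.swap (0 : Fin (m + 2)) 1) hσ1
          rwa [Equiv.swap_apply_self] at this
        rw [Equiv.swap_apply_left] at h2
        exact Fin.succ_injective _ (h2.trans Fin.succ_zero_eq_one.symm)
      obtain ⟨q, f, rfl⟩ : ∃ q f, e = decomposeFin.symm (q, f) :=
        ⟨(decomposeFin e).1, (decomposeFin e).2, by simp⟩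
      have hq : q = 0 := by
        rw [decomposeFin_symm_apply_zero] at he0
        exact he0
      subst hq
      have hf : CondE f := by
        intro k
        have := hσ k.succ.succ
        rw [decomposeFin_symm_apply_succ, decomposeFin_symm_apply_succ, Equiv.swap_self] at this
        simp only [Equiv.refl_apply] at this
        rw [Equiv.swap_apply_of_ne_of_ne (Fin.succ_ne_zero _)
          (fun h => Fin.succ_ne_zero _ (Fin.succ_injective _ (h.trans Fin.succ_zero_eq_one.symm)))]
          at this
        simp only [Fin.val_succ] at this
        omega
      exact ⟨Sum.inr ⟨f, hf⟩, rfl⟩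

lemma card_condE : ∀ m : ℕ, Nat.card {σ : Equiv.Perm (Fin m) // CondE σ} = Nat.fib (m + 1) := by
  intro m
  induction m using Nat.strong_induction_on with
  | _ m ih =>
    match m with
    | 0 =>
      have hall : ∀ σ : Equiv.Perm (Fin 0), CondE σ := fun σ i => i.elim0
      rw [Nat.card_congr (Equiv.subtypeUnivEquiv hall), Nat.card_eq_fintype_card]
      simp
    | 1 =>
      have hall : ∀ σ : Equiv.Perm (Fin 1), CondE σ := by
        intro σ i
        have h1 : σ i = 0 := Subsingleton.elim _ _
        have h2 : i = 0 := Subsingleton.elim _ _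
        simp [h1, h2]
      rw [Nat.card_congr (Equiv.subtypeUnivEquiv hall), Nat.card_eq_fintype_card]
      simp
    | (k + 2) =>
      rw [← Nat.card_eq_of_bijective _ (stepMap_bijective k), Nat.card_sum,
        ih (k + 1) (by omega), ih k (by omega)]
      have h : Nat.fib (k + 2 + 1) = Nat.fib (k + 1) + Nat.fib (k + 1 + 1) := by
        rw [show k + 2 + 1 = (k + 1) + 2 by ring, Nat.fib_add_two]
      omega

/-! ### From `CondC` to `CondE` by reversal -/

lemma card_condC (n : ℕ) :
    Nat.card {π : Equiv.Perm (Fin n) // CondC π} = Nat.fib (n + 1) := by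
  rw [← card_condE n]
  apply Nat.card_congr
  have key : ∀ π : Equiv.Perm (Fin n), CondC π ↔ CondE (π.trans Fin.revPerm) := by
    intro π
    unfold CondC CondE
    apply forall_congr'
    intro i
    rw [Equiv.trans_apply, Fin.revPerm_apply, Fin.val_rev]
    have := (π i).isLt
    have := i.isLt
    omega
  have hinv : ∀ σ : Equiv.Perm (Fin n), (σ.trans Fin.revPerm).trans Fin.revPerm = σ := by
    intro σ
    ext i
    simp [Fin.rev_rev]
  exact
    { toFun := fun p => ⟨p.1.trans Fin.revPerm, (key p.1).1 p.2⟩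
      invFun := fun q => ⟨q.1.trans Fin.revPerm,
        (key (q.1.trans Fin.revPerm)).2 (by rw [hinv]; exact q.2)⟩
      left_inv := fun p => Subtype.ext (hinv p.1)
      right_inv := fun q => Subtype.ext (hinv q.1) }

/-! ### Main theorem -/

theorem av_nineteen_patterns (n : ℕ) (hn : 4 ≤ n) :
    (∀ π : Equiv.Perm (Fin n),
      (PermAvoids π ![1, 2, 3, 4] ∧ PermAvoids π ![1, 2, 4, 3] ∧
       PermAvoids π ![1, 3, 2, 4] ∧ PermAvoids π ![1, 3, 4, 2] ∧
       PermAvoids π ![1, 4, 2, 3] ∧ PermAvoids π ![1, 4, 3, 2] ∧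
       PermAvoids π ![2, 1, 3, 4] ∧ PermAvoids π ![2, 1, 4, 3] ∧
       PermAvoids π ![2, 3, 1, 4] ∧ PermAvoids π ![2, 3, 4, 1] ∧
       PermAvoids π ![2, 4, 1, 3] ∧ PermAvoids π ![2, 4, 3, 1] ∧
       PermAvoids π ![3, 1, 2, 4] ∧ PermAvoids π ![3, 1, 4, 2] ∧
       PermAvoids π ![3, 2, 1, 4] ∧ PermAvoids π ![3, 2, 4, 1] ∧
       PermAvoids π ![4, 1, 2, 3] ∧ PermAvoids π ![4, 1, 3, 2] ∧
       PermAvoids π ![4, 2, 1, 3]) ↔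
      (PermAvoids π ![1, 2, 3] ∧ PermAvoids π ![1, 3, 2] ∧ PermAvoids π ![2, 1, 3])) ∧
    Nat.card {π : Equiv.Perm (Fin n) //
        PermAvoids π ![1, 2, 3, 4] ∧ PermAvoids π ![1, 2, 4, 3] ∧
        PermAvoids π ![1, 3, 2, 4] ∧ PermAvoids π ![1, 3, 4, 2] ∧
        PermAvoids π ![1, 4, 2, 3] ∧ PermAvoids π ![1, 4, 3, 2] ∧
        PermAvoids π ![2, 1, 3, 4] ∧ PermAvoids π ![2, 1, 4, 3] ∧
        PermAvoids π ![2, 3, 1, 4] ∧ PermAvoids π ![2, 3, 4, 1] ∧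
        PermAvoids π ![2, 4, 1, 3] ∧ PermAvoids π ![2, 4, 3, 1] ∧
        PermAvoids π ![3, 1, 2, 4] ∧ PermAvoids π ![3, 1, 4, 2] ∧
        PermAvoids π ![3, 2, 1, 4] ∧ PermAvoids π ![3, 2, 4, 1] ∧
        PermAvoids π ![4, 1, 2, 3] ∧ PermAvoids π ![4, 1, 3, 2] ∧
        PermAvoids π ![4, 2, 1, 3]} = Nat.fib (n + 1) := by
  constructor
  · intro π
    constructor
    · intro H
      have hD : CondD π := condD_of_avoid19 hn H
      exact ⟨avoid_of_condD hD _ 0 1 2 (by decide) (by decide) (by decide),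
        avoid_of_condD hD _ 0 1 2 (by decide) (by decide) (by decide),
        avoid_of_condD hD _ 0 1 2 (by decide) (by decide) (by decide)⟩
    · rintro ⟨h123, h132, h213⟩
      exact avoid19_of_condD (condD_of_avoid3 h123 h132 h213)
  · have hiff : ∀ π : Equiv.Perm (Fin n),
        (PermAvoids π ![1, 2, 3, 4] ∧ PermAvoids π ![1, 2, 4, 3] ∧
        PermAvoids π ![1, 3, 2, 4] ∧ PermAvoids π ![1, 3, 4, 2] ∧
        PermAvoids π ![1, 4, 2, 3] ∧ PermAvoids π ![1, 4, 3, 2] ∧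
        PermAvoids π ![2, 1, 3, 4] ∧ PermAvoids π ![2, 1, 4, 3] ∧
        PermAvoids π ![2, 3, 1, 4] ∧ PermAvoids π ![2, 3, 4, 1] ∧
        PermAvoids π ![2, 4, 1, 3] ∧ PermAvoids π ![2, 4, 3, 1] ∧
        PermAvoids π ![3, 1, 2, 4] ∧ PermAvoids π ![3, 1, 4, 2] ∧
        PermAvoids π ![3, 2, 1, 4] ∧ PermAvoids π ![3, 2, 4, 1] ∧
        PermAvoids π ![4, 1, 2, 3] ∧ PermAvoids π ![4, 1, 3, 2] ∧
        PermAvoids π ![4, 2, 1, 3]) ↔ CondC π := by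
      intro π
      constructor
      · intro H
        exact condC_of_condD (condD_of_avoid19 hn H)
      · intro hC
        exact avoid19_of_condD (condD_of_condC hC)
    rw [Nat.card_congr (Equiv.subtypeEquivRight hiff)]
    exact card_condC n
end

section
/- For every natural number n ≥ 2, the number of permutations of length n avoiding all eight patterns 1243, 1324, 2143, 2314, 3142, 3214, 4132 and 4213 equals n·2^(n−2). -/
namespace AvEight

variable {n : ℕ}

def Cond (π : Equiv.Perm (Fin n)) : Prop :=
  ∀ i j k : Fin n, 0 < i.val → i < j → j < k → π i < π k → π i < π j ∧ π j < π k

def desc (hn : 2 ≤ n) (π : Equiv.Perm (Fin n)) (t : Fin (n - 2)) : Bool :=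
  decide (π ⟨t.val + 2, by have := t.isLt; omega⟩ < π ⟨t.val + 1, by have := t.isLt; omega⟩)

/-- number of marked descents strictly before tail index `m` -/
def nd (d : Fin (n - 2) → Bool) (m : ℕ) : ℕ :=
  (Finset.univ.filter (fun s : Fin (n - 2) => s.val < m ∧ d s)).card

/-- a weight whose order encodes the intended tail order -/
def wt (d : Fin (n - 2) → Bool) (m : ℕ) : ℕ := (nd d (n - 2) - nd d m) * n + m

lemma nd_mono (d : Fin (n - 2) → Bool) {a b : ℕ} (h : a ≤ b) : nd d a ≤ nd d b := by
  apply Finset.card_le_card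
  intro s hs
  simp only [Finset.mem_filter] at *
  exact ⟨hs.1, by omega, hs.2.2⟩

lemma nd_le (d : Fin (n - 2) → Bool) (m : ℕ) : nd d m ≤ nd d (n - 2) := by
  apply Finset.card_le_card
  intro s hs
  simp only [Finset.mem_filter] at *
  exact ⟨hs.1, s.isLt, hs.2.2⟩

lemma nd_succ (d : Fin (n - 2) → Bool) (m : ℕ) (hm : m < n - 2) :
    nd d (m + 1) = nd d m + (if d ⟨m, hm⟩ then 1 else 0) := by
  classical
  unfold nd
  have : (Finset.univ.filter (fun s : Fin (n - 2) => s.val < m + 1 ∧ d s)) =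
      (Finset.univ.filter (fun s : Fin (n - 2) => s.val < m ∧ d s)) ∪
      (Finset.univ.filter (fun s : Fin (n - 2) => s = ⟨m, hm⟩ ∧ d s)) := by
    ext s
    simp only [Finset.mem_filter, Finset.mem_union, Finset.mem_univ, true_and]
    constructor
    · rintro ⟨h1, h2⟩
      rcases Nat.lt_or_ge s.val m with h | h
      · exact Or.inl ⟨h, h2⟩
      · exact Or.inr ⟨Fin.ext (by simp only [Fin.val_mk]; omega), h2⟩
    · rintro (⟨h1, h2⟩ | ⟨h1, h2⟩)
      · exact ⟨by omega, h2⟩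
      · exact ⟨by rw [h1]; simp only [Fin.val_mk]; omega, h2⟩
  rw [this, Finset.card_union_of_disjoint]
  · congr 1
    by_cases hd : d ⟨m, hm⟩
    · rw [if_pos hd]
      have : (Finset.univ.filter (fun s : Fin (n - 2) => s = ⟨m, hm⟩ ∧ d s)) = {⟨m, hm⟩} := by
        ext s
        simp only [Finset.mem_filter, Finset.mem_univ, true_and, Finset.mem_singleton]
        constructor
        · rintro ⟨h1, _⟩; exact h1
        · rintro rfl; exact ⟨rfl, hd⟩
      rw [this]; simp
    · rw [if_neg hd]
      have : (Finset.univ.filter (fun s : Fin (n - 2) => s = ⟨m, hm⟩ ∧ d s)) = ∅ := by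
        ext s
        simp only [Finset.mem_filter, Finset.mem_univ, true_and, Finset.notMem_empty,
          iff_false]
        rintro ⟨rfl, h2⟩; exact hd h2
      rw [this]; simp
  · rw [Finset.disjoint_left]
    intro s hs1 hs2
    simp only [Finset.mem_filter] at *
    have h2' := hs2.2.1
    subst h2'
    have := hs1.2.1
    simp only [Fin.val_mk] at this
    omega

lemma wt_lt_wt (d : Fin (n - 2) → Bool) {a b : ℕ} (hab : a < b) (hb : b ≤ n - 2) (hbn : b < n) :
    (wt d a < wt d b ↔ nd d a = nd d b) ∧ (wt d b < wt d a ↔ nd d a ≠ nd d b) := by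
  have h1 : nd d a ≤ nd d b := nd_mono d (le_of_lt hab)
  have h2 : nd d b ≤ nd d (n - 2) := nd_le d b
  set T := nd d (n - 2) with hT
  rcases eq_or_lt_of_le h1 with he | hl
  · constructor
    · rw [he]
      simp only [iff_true, he]
      unfold wt
      rw [← hT, he]
      exact Nat.add_lt_add_left hab _
    · rw [he]
      simp only [ne_eq, not_true_eq_false, iff_false, not_lt]
      unfold wt
      rw [← hT, he]
      exact le_of_lt (Nat.add_lt_add_left hab _)
  · have key : wt d b < wt d a := by
      unfold wt
      rw [← hT]
      have hc : T - nd d b + 1 ≤ T - nd d a := by omega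
      calc (T - nd d b) * n + b < (T - nd d b) * n + n := Nat.add_lt_add_left hbn _
        _ = (T - nd d b + 1) * n := by ring
        _ ≤ (T - nd d a) * n := Nat.mul_le_mul_right n hc
        _ ≤ (T - nd d a) * n + a := Nat.le_add_right _ _
    constructor
    · constructor
      · intro h; omega
      · intro h; omega
    · simp only [key, true_iff]
      omega


section Build

variable {n : ℕ}

/-- weight as a function on tail indices -/
def W (d : Fin (n - 2) → Bool) (m : Fin (n - 1)) : ℕ := wt d m.val

lemma W_lt_iff (d : Fin (n - 2) → Bool) {a b : Fin (n - 1)} (hab : a < b) :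
    W d a < W d b ↔ nd d a.val = nd d b.val := by
  have hb := b.isLt
  exact (wt_lt_wt d hab (by omega) (by omega)).1

lemma W_gt_iff (d : Fin (n - 2) → Bool) {a b : Fin (n - 1)} (hab : a < b) :
    W d b < W d a ↔ nd d a.val ≠ nd d b.val := by
  have hb := b.isLt
  exact (wt_lt_wt d hab (by omega) (by omega)).2

lemma W_inj (d : Fin (n - 2) → Bool) : Function.Injective (W d) := by
  intro a b h
  by_contra hne
  rcases lt_or_gt_of_ne (fun e => hne (Fin.ext e) : a.val ≠ b.val) with hl | hl
  · have hl' : a < b := hl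
    rcases eq_or_ne (nd d a.val) (nd d b.val) with he | he
    · have := (W_lt_iff d hl').mpr he; omega
    · have := (W_gt_iff d hl').mpr he; omega
  · have hl' : b < a := hl
    rcases eq_or_ne (nd d b.val) (nd d a.val) with he | he
    · have := (W_lt_iff d hl').mpr he; omega
    · have := (W_gt_iff d hl').mpr he; omega

def Wimg (d : Fin (n - 2) → Bool) : Finset ℕ := Finset.univ.image (W d)

lemma Wimg_card (d : Fin (n - 2) → Bool) : (Wimg d : Finset ℕ).card = n - 1 := by
  unfold Wimg
  rw [Finset.card_image_of_injective _ (W_inj d)]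
  simp

noncomputable def rnk (d : Fin (n - 2) → Bool) (m : Fin (n - 1)) : Fin (n - 1) :=
  ((Wimg d).orderIsoOfFin (Wimg_card d)).symm
    ⟨W d m, Finset.mem_image_of_mem _ (Finset.mem_univ m)⟩

lemma rnk_lt_iff (d : Fin (n - 2) → Bool) {a b : Fin (n - 1)} :
    rnk d a < rnk d b ↔ W d a < W d b := by
  unfold rnk
  rw [OrderIso.lt_iff_lt]
  exact Subtype.mk_lt_mk

lemma rnk_inj (d : Fin (n - 2) → Bool) : Function.Injective (rnk d) := by
  intro a b h
  apply W_inj d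
  unfold rnk at h
  have := ((Wimg d).orderIsoOfFin (Wimg_card d)).symm.injective h
  exact congrArg Subtype.val this

lemma erase_card (v : Fin n) : (Finset.univ.erase v).card = n - 1 := by simp

noncomputable def tailFun (v : Fin n) (d : Fin (n - 2) → Bool) (m : Fin (n - 1)) : Fin n :=
  ((Finset.univ.erase v).orderIsoOfFin (erase_card v) (rnk d m) : Fin n)

lemma tailFun_ne (v : Fin n) (d : Fin (n - 2) → Bool) (m : Fin (n - 1)) :
    tailFun v d m ≠ v := by
  unfold tailFun
  exact Finset.ne_of_mem_erase (Finset.coe_mem _)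

lemma tailFun_lt_iff (v : Fin n) (d : Fin (n - 2) → Bool) {a b : Fin (n - 1)} :
    tailFun v d a < tailFun v d b ↔ W d a < W d b := by
  unfold tailFun
  rw [Subtype.coe_lt_coe, OrderIso.lt_iff_lt, rnk_lt_iff]

lemma tailFun_inj (v : Fin n) (d : Fin (n - 2) → Bool) : Function.Injective (tailFun v d) := by
  intro a b h
  apply rnk_inj d
  exact (((Finset.univ.erase v).orderIsoOfFin (erase_card v)).injective) (Subtype.ext h)

noncomputable def buildFun (v : Fin n) (d : Fin (n - 2) → Bool) (i : Fin n) : Fin n :=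
  if h : i.val = 0 then v else tailFun v d ⟨i.val - 1, by have := i.isLt; omega⟩

lemma buildFun_inj (v : Fin n) (d : Fin (n - 2) → Bool) :
    Function.Injective (buildFun v d) := by
  intro a b h
  unfold buildFun at h
  by_cases ha : a.val = 0 <;> by_cases hb : b.val = 0
  · exact Fin.ext (by omega)
  · rw [dif_pos ha, dif_neg hb] at h
    exact absurd h.symm (tailFun_ne v d _)
  · rw [dif_neg ha, dif_pos hb] at h
    exact absurd h (tailFun_ne v d _)
  · rw [dif_neg ha, dif_neg hb] at h
    have h2 := tailFun_inj v d h
    have h3 := congrArg Fin.val h2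
    simp only [Fin.val_mk] at h3
    exact Fin.ext (by omega)

noncomputable def build (v : Fin n) (d : Fin (n - 2) → Bool) : Equiv.Perm (Fin n) :=
  Equiv.ofBijective _ (Finite.injective_iff_bijective.mp (buildFun_inj v d))

lemma build_apply (v : Fin n) (d : Fin (n - 2) → Bool) (i : Fin n) :
    build v d i = buildFun v d i := rfl

lemma build_zero (v : Fin n) (d : Fin (n - 2) → Bool) (h0 : 0 < n) :
    build v d ⟨0, h0⟩ = v := by
  rw [build_apply]; unfold buildFun; rw [dif_pos rfl]

lemma build_tail (v : Fin n) (d : Fin (n - 2) → Bool) {a : ℕ} (h1 : 1 ≤ a) (h2 : a < n) :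
    build v d ⟨a, h2⟩ = tailFun v d ⟨a - 1, by omega⟩ := by
  rw [build_apply]; unfold buildFun
  rw [dif_neg (show ¬ ((⟨a, h2⟩ : Fin n).val = 0) by simp only [Fin.val_mk]; omega)]

lemma build_lt_iff (v : Fin n) (d : Fin (n - 2) → Bool) {a b : ℕ}
    (ha : 1 ≤ a) (hb : 1 ≤ b) (han : a < n) (hbn : b < n) :
    build v d ⟨a, han⟩ < build v d ⟨b, hbn⟩ ↔ wt d (a - 1) < wt d (b - 1) := by
  rw [build_tail v d ha han, build_tail v d hb hbn, tailFun_lt_iff]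
  exact Iff.rfl

lemma cond_build (v : Fin n) (d : Fin (n - 2) → Bool) : Cond (build v d) := by
  intro i j k hi hij hjk hik
  obtain ⟨iv, hiv⟩ := i
  obtain ⟨jv, hjv⟩ := j
  obtain ⟨kv, hkv⟩ := k
  have hij' : iv < jv := hij
  have hjk' : jv < kv := hjk
  have hi1 : 1 ≤ iv := hi
  have hj1 : 1 ≤ jv := by omega
  have hk1 : 1 ≤ kv := by omega
  rw [build_lt_iff v d hi1 hk1] at hik
  rw [build_lt_iff v d hi1 hj1, build_lt_iff v d hj1 hk1]
  have hik2 : iv - 1 < kv - 1 := by omega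
  have hij2 : iv - 1 < jv - 1 := by omega
  have hjk2 : jv - 1 < kv - 1 := by omega
  have hkb : kv - 1 ≤ n - 2 := by omega
  have hkb' : kv - 1 < n := by omega
  have hjb : jv - 1 ≤ n - 2 := by omega
  have hjb' : jv - 1 < n := by omega
  have he := (wt_lt_wt d hik2 hkb hkb').1.mp hik
  have h1 : nd d (iv - 1) ≤ nd d (jv - 1) := nd_mono d (by omega)
  have h2 : nd d (jv - 1) ≤ nd d (kv - 1) := nd_mono d (by omega)
  constructor
  · exact (wt_lt_wt d hij2 hjb hjb').1.mpr (by omega)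
  · exact (wt_lt_wt d hjk2 hkb hkb').1.mpr (by omega)

lemma desc_build (hn : 2 ≤ n) (v : Fin n) (d : Fin (n - 2) → Bool) :
    desc hn (build v d) = d := by
  funext t
  have ht := t.isLt
  unfold desc
  have hlt := build_lt_iff v d (a := t.val + 2) (b := t.val + 1)
    (by omega) (by omega) (by omega) (by omega)
  simp only [Nat.add_sub_cancel] at hlt
  have hsucc : t.val + 2 - 1 = t.val + 1 := by omega
  rw [hsucc] at hlt
  have hnd : nd d (t.val + 1) = nd d t.val + (if d t then 1 else 0) := by
    have h := nd_succ d t.val ht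
    simpa using h
  have hpair := wt_lt_wt d (a := t.val) (b := t.val + 1) (by omega) (by omega) (by omega)
  by_cases hd : d t
  · have hne : nd d t.val ≠ nd d (t.val + 1) := by rw [hnd, if_pos hd]; omega
    have hw : wt d (t.val + 1) < wt d t.val := hpair.2.mpr hne
    rw [hd]
    rw [decide_eq_true_iff]
    exact hlt.mpr hw
  · have heq : nd d t.val = nd d (t.val + 1) := by rw [hnd, if_neg hd]; omega
    have hw : wt d t.val < wt d (t.val + 1) := hpair.1.mpr heq
    have hnw : ¬ (wt d (t.val + 1) < wt d t.val) := by omega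
    have hdf : d t = false := by simpa using hd
    rw [hdf, decide_eq_false_iff_not]
    intro hcon
    exact hnw (hlt.mp hcon)

end Build


section Unique

variable {n : ℕ}

lemma run_lemma (π : Equiv.Perm (Fin n)) (hC : Cond π) {a b : ℕ}
    (ha : 1 ≤ a) (hab : a < b) (hb : b < n) :
    (π ⟨a, by omega⟩ < π ⟨b, hb⟩ ↔
      ∀ m, ∀ (hm1 : a ≤ m) (hm2 : m + 1 ≤ b), π ⟨m, by omega⟩ < π ⟨m + 1, by omega⟩) := by
  constructor
  · intro h m hm1 hm2
    rcases eq_or_lt_of_le hm1 with he | ham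
    · subst he
      rcases eq_or_lt_of_le hm2 with he2 | hlt
      · have hb' : b = a + 1 := he2.symm
        subst hb'
        exact h
      · exact (hC ⟨a, by omega⟩ ⟨a + 1, by omega⟩ ⟨b, hb⟩ (by exact ha)
          (Fin.mk_lt_mk.mpr (by omega)) (Fin.mk_lt_mk.mpr (by omega)) h).1
    · have h1 := hC ⟨a, by omega⟩ ⟨m, by omega⟩ ⟨b, hb⟩ (by exact ha)
        (Fin.mk_lt_mk.mpr (by omega)) (Fin.mk_lt_mk.mpr (by omega)) h
      rcases eq_or_lt_of_le hm2 with he | hlt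
      · have hb' : b = m + 1 := he.symm
        subst hb'
        exact h1.2
      · exact (hC ⟨m, by omega⟩ ⟨m + 1, by omega⟩ ⟨b, hb⟩ (show 0 < m by omega)
          (Fin.mk_lt_mk.mpr (by omega)) (Fin.mk_lt_mk.mpr (by omega)) h1.2).1
  · intro hall
    have key : ∀ c (h1 : a + 1 ≤ c), ∀ (hc : c < n), c ≤ b → π ⟨a, by omega⟩ < π ⟨c, hc⟩ := by
      intro c h1
      induction c, h1 using Nat.le_induction with
      | base =>
        intro hc hcb
        exact hall a le_rfl (by omega)
      | succ c hac ih =>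
        intro hc hcb
        have hc' : c < n := by omega
        exact lt_trans (ih hc' (by omega)) (hall c (by omega) (by omega))
    exact key b (by omega) hb (le_refl b)

lemma lt_iff_not_lt (τ : Equiv.Perm (Fin n)) (x y : Fin n) (hxy : x ≠ y) :
    τ x < τ y ↔ ¬ τ y < τ x := by
  have hne : τ x ≠ τ y := fun e => hxy (τ.injective e)
  constructor
  · exact fun h => asymm h
  · intro h
    rcases lt_or_gt_of_ne hne with h' | h'
    · exact h'
    · exact absurd h' h

lemma unique_perm (hn : 2 ≤ n) (π σ : Equiv.Perm (Fin n)) (hπ : Cond π) (hσ : Cond σ)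
    (h0 : π ⟨0, by omega⟩ = σ ⟨0, by omega⟩) (hd : desc hn π = desc hn σ) : π = σ := by
  classical
  have hcons : ∀ m, ∀ (hm1 : 1 ≤ m) (hm2 : m + 1 < n),
      (π ⟨m, by omega⟩ < π ⟨m + 1, by omega⟩ ↔ σ ⟨m, by omega⟩ < σ ⟨m + 1, by omega⟩) := by
    intro m h1 h2
    have ht : m - 1 < n - 2 := by omega
    have hdm := congrFun hd ⟨m - 1, ht⟩
    unfold desc at hdm
    simp only [Fin.val_mk] at hdm
    have e1 : m - 1 + 2 = m + 1 := by omega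
    have e2 : m - 1 + 1 = m := by omega
    simp only [e1, e2] at hdm
    have hgt := decide_eq_decide.mp hdm
    have hne : (⟨m, by omega⟩ : Fin n) ≠ ⟨m + 1, by omega⟩ := by
      intro e
      have := congrArg Fin.val e
      simp only [Fin.val_mk] at this
      omega
    rw [lt_iff_not_lt π _ _ hne, lt_iff_not_lt σ _ _ hne]
    exact not_congr hgt
  have hagree : ∀ a b : ℕ, 1 ≤ a → (hab : a < b) → (hb : b < n) →
      (π ⟨a, by omega⟩ < π ⟨b, hb⟩ ↔ σ ⟨a, by omega⟩ < σ ⟨b, hb⟩) := by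
    intro a b ha hab hb
    rw [run_lemma π hπ ha hab hb, run_lemma σ hσ ha hab hb]
    constructor
    · intro h m hm1 hm2
      exact (hcons m (by omega) (by omega)).mp (h m hm1 hm2)
    · intro h m hm1 hm2
      exact (hcons m (by omega) (by omega)).mpr (h m hm1 hm2)
  have hagree2 : ∀ a b : Fin n, 0 < a.val → 0 < b.val → (π a < π b ↔ σ a < σ b) := by
    intro a b ha hb
    rcases lt_trichotomy a.val b.val with h | h | h
    · exact hagree a.val b.val ha h b.isLt
    · have he : a = b := Fin.ext h
      subst he
      simp
    · have hne : a ≠ b := fun e => by rw [e] at h; omega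
      rw [lt_iff_not_lt π a b hne, lt_iff_not_lt σ a b hne]
      exact not_congr (hagree b.val a.val hb h a.isLt)
  have hval : ∀ a : Fin n, 0 < a.val → π a = σ a := by
    intro a ha
    have hsets : Finset.univ.filter (fun j : Fin n => 0 < j.val ∧ π j < π a) =
        Finset.univ.filter (fun j : Fin n => 0 < j.val ∧ σ j < σ a) := by
      ext j
      simp only [Finset.mem_filter, Finset.mem_univ, true_and]
      constructor
      · rintro ⟨hj, hlt⟩
        exact ⟨hj, (hagree2 j a hj ha).mp hlt⟩
      · rintro ⟨hj, hlt⟩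
        exact ⟨hj, (hagree2 j a hj ha).mpr hlt⟩
    set v : Fin n := π ⟨0, by omega⟩ with hv
    have himg : ∀ (τ : Equiv.Perm (Fin n)), τ ⟨0, by omega⟩ = v →
        Finset.image τ (Finset.univ.filter (fun j : Fin n => 0 < j.val ∧ τ j < τ a)) =
        Finset.univ.filter (fun x : Fin n => x ≠ v ∧ x < τ a) := by
      intro τ hτ0
      ext x
      simp only [Finset.mem_image, Finset.mem_filter, Finset.mem_univ, true_and]
      constructor
      · rintro ⟨j, ⟨hj, hlt⟩, rfl⟩
        refine ⟨?_, hlt⟩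
        intro he
        have hje : j = ⟨0, by omega⟩ := τ.injective (he.trans hτ0.symm)
        rw [hje] at hj
        simp at hj
      · rintro ⟨hxv, hxa⟩
        refine ⟨τ.symm x, ⟨?_, ?_⟩, τ.apply_symm_apply x⟩
        · by_contra h0'
          have hz : τ.symm x = ⟨0, by omega⟩ := by
            apply Fin.ext
            simp only [Fin.val_mk]
            omega
          apply hxv
          rw [← τ.apply_symm_apply x, hz, hτ0]
        · rw [τ.apply_symm_apply]
          exact hxa
    have hc1 : (Finset.univ.filter (fun x : Fin n => x ≠ v ∧ x < π a)).card =
        (Finset.univ.filter (fun x : Fin n => x ≠ v ∧ x < σ a)).card := by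
      rw [← himg π rfl, ← himg σ h0.symm]
      rw [Finset.card_image_of_injective _ π.injective,
        Finset.card_image_of_injective _ σ.injective, hsets]
    have hπv : π a ≠ v := by
      intro e
      have := π.injective e
      have := congrArg Fin.val this
      simp only [Fin.val_mk] at this
      omega
    have hσv : σ a ≠ v := by
      intro e
      have := σ.injective (e.trans h0)
      have := congrArg Fin.val this
      simp only [Fin.val_mk] at this
      omega
    rcases lt_trichotomy (π a) (σ a) with h | h | h
    · exfalso
      have hsub : (Finset.univ.filter (fun x : Fin n => x ≠ v ∧ x < π a)) ⊆
          (Finset.univ.filter (fun x : Fin n => x ≠ v ∧ x < σ a)) := by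
        intro x hx
        simp only [Finset.mem_filter, Finset.mem_univ, true_and] at *
        exact ⟨hx.1, lt_trans hx.2 h⟩
      have hmem : π a ∈ (Finset.univ.filter (fun x : Fin n => x ≠ v ∧ x < σ a)) := by
        simp only [Finset.mem_filter, Finset.mem_univ, true_and]
        exact ⟨hπv, h⟩
      have hnmem : π a ∉ (Finset.univ.filter (fun x : Fin n => x ≠ v ∧ x < π a)) := by
        simp only [Finset.mem_filter, Finset.mem_univ, true_and]
        rintro ⟨-, hlt⟩
        exact lt_irrefl _ hlt
      have : (Finset.univ.filter (fun x : Fin n => x ≠ v ∧ x < π a)).card <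
          (Finset.univ.filter (fun x : Fin n => x ≠ v ∧ x < σ a)).card :=
        Finset.card_lt_card (Finset.ssubset_iff_of_subset hsub |>.mpr ⟨π a, hmem, hnmem⟩)
      omega
    · exact h
    · exfalso
      have hsub : (Finset.univ.filter (fun x : Fin n => x ≠ v ∧ x < σ a)) ⊆
          (Finset.univ.filter (fun x : Fin n => x ≠ v ∧ x < π a)) := by
        intro x hx
        simp only [Finset.mem_filter, Finset.mem_univ, true_and] at *
        exact ⟨hx.1, lt_trans hx.2 h⟩
      have hmem : σ a ∈ (Finset.univ.filter (fun x : Fin n => x ≠ v ∧ x < π a)) := by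
        simp only [Finset.mem_filter, Finset.mem_univ, true_and]
        exact ⟨hσv, h⟩
      have hnmem : σ a ∉ (Finset.univ.filter (fun x : Fin n => x ≠ v ∧ x < σ a)) := by
        simp only [Finset.mem_filter, Finset.mem_univ, true_and]
        rintro ⟨-, hlt⟩
        exact lt_irrefl _ hlt
      have : (Finset.univ.filter (fun x : Fin n => x ≠ v ∧ x < σ a)).card <
          (Finset.univ.filter (fun x : Fin n => x ≠ v ∧ x < π a)).card :=
        Finset.card_lt_card (Finset.ssubset_iff_of_subset hsub |>.mpr ⟨σ a, hmem, hnmem⟩)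
      omega
  apply Equiv.ext
  intro i
  by_cases hi : i.val = 0
  · have : i = ⟨0, by omega⟩ := Fin.ext hi
    rw [this]
    exact h0
  · exact hval i (by omega)

end Unique

section Patterns

variable {n : ℕ}

lemma pat_contains (π : Equiv.Perm (Fin n)) (p : Fin 4 → ℕ) (z i j k : Fin n)
    (h1 : z < i) (h2 : i < j) (h3 : j < k)
    (hp : ∀ a b : Fin 4, p a < p b ↔ π (![z, i, j, k] a) < π (![z, i, j, k] b)) :
    PermContains π p := by
  have e0 : ∀ h, (⟨0, h⟩ : Fin 4) = 0 := fun _ => rfl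
  have e1 : ∀ h, (⟨1, h⟩ : Fin 4) = 1 := fun _ => rfl
  have e2 : ∀ h, (⟨2, h⟩ : Fin 4) = 2 := fun _ => rfl
  have e3 : ∀ h, (⟨3, h⟩ : Fin 4) = 3 := fun _ => rfl
  refine ⟨![z, i, j, k], ?_, hp⟩
  rw [Fin.strictMono_iff_lt_succ]
  intro a
  fin_cases a <;>
    simp only [Fin.castSucc_mk, Fin.succ_mk, Nat.reduceAdd, e0, e1, e2, e3,
      Matrix.cons_val_zero, Matrix.cons_val_one, Matrix.cons_val_two, Matrix.cons_val_three,
      Matrix.head_cons, Matrix.tail_cons] <;>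
    first | exact h1 | exact h2 | exact h3

lemma cond_of_avoids (π : Equiv.Perm (Fin n))
    (A1 : PermAvoids π ![1, 2, 4, 3]) (A2 : PermAvoids π ![1, 3, 2, 4])
    (A3 : PermAvoids π ![2, 1, 4, 3]) (A4 : PermAvoids π ![2, 3, 1, 4])
    (A5 : PermAvoids π ![3, 1, 4, 2]) (A6 : PermAvoids π ![3, 2, 1, 4])
    (A7 : PermAvoids π ![4, 1, 3, 2]) (A8 : PermAvoids π ![4, 2, 1, 3]) :
    Cond π := by
  have e0 : ∀ h, (⟨0, h⟩ : Fin 4) = 0 := fun _ => rfl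
  have e1 : ∀ h, (⟨1, h⟩ : Fin 4) = 1 := fun _ => rfl
  have e2 : ∀ h, (⟨2, h⟩ : Fin 4) = 2 := fun _ => rfl
  have e3 : ∀ h, (⟨3, h⟩ : Fin 4) = 3 := fun _ => rfl
  intro i j k hi hij hjk hik
  by_contra hcon
  have hn0 : 0 < n := Nat.lt_of_le_of_lt (Nat.zero_le _) i.isLt
  set z : Fin n := ⟨0, hn0⟩ with hz
  have hzi : z < i := hi
  have hik' : (π i).val < (π k).val := hik
  have hd_zi : z ≠ i := ne_of_lt hzi
  have hd_zj : z ≠ j := ne_of_lt (lt_trans hzi hij)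
  have hd_zk : z ≠ k := ne_of_lt (lt_trans (lt_trans hzi hij) hjk)
  rcases not_and_or.mp hcon with hc | hc
  · -- 213 shape : π j < π i < π k
    have hne_ij : π i ≠ π j := fun e => (ne_of_lt hij) (π.injective e)
    have hji : (π j).val < (π i).val := by
      rcases lt_or_gt_of_ne hne_ij with h | h
      · exact absurd h hc
      · exact h
    rcases Nat.lt_trichotomy (π z).val (π j).val with hz1 | hz1 | hz1
    · refine A2 (pat_contains π _ z i j k hzi hij hjk ?_)
      intro a b
      fin_cases a <;> fin_cases b <;>
        simp only [e0, e1, e2, e3, Matrix.cons_val_zero, Matrix.cons_val_one,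
          Matrix.cons_val_two, Matrix.cons_val_three, Matrix.head_cons, Matrix.tail_cons,
          Fin.lt_def] <;> omega
    · exact hd_zj (π.injective (Fin.ext hz1))
    · rcases Nat.lt_trichotomy (π z).val (π i).val with hz2 | hz2 | hz2
      · refine A4 (pat_contains π _ z i j k hzi hij hjk ?_)
        intro a b
        fin_cases a <;> fin_cases b <;>
          simp only [e0, e1, e2, e3, Matrix.cons_val_zero, Matrix.cons_val_one,
            Matrix.cons_val_two, Matrix.cons_val_three, Matrix.head_cons, Matrix.tail_cons,
            Fin.lt_def] <;> omega
      · exact hd_zi (π.injective (Fin.ext hz2))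
      · rcases Nat.lt_trichotomy (π z).val (π k).val with hz3 | hz3 | hz3
        · refine A6 (pat_contains π _ z i j k hzi hij hjk ?_)
          intro a b
          fin_cases a <;> fin_cases b <;>
            simp only [e0, e1, e2, e3, Matrix.cons_val_zero, Matrix.cons_val_one,
              Matrix.cons_val_two, Matrix.cons_val_three, Matrix.head_cons, Matrix.tail_cons,
              Fin.lt_def] <;> omega
        · exact hd_zk (π.injective (Fin.ext hz3))
        · refine A8 (pat_contains π _ z i j k hzi hij hjk ?_)
          intro a b
          fin_cases a <;> fin_cases b <;>
            simp only [e0, e1, e2, e3, Matrix.cons_val_zero, Matrix.cons_val_one,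
              Matrix.cons_val_two, Matrix.cons_val_three, Matrix.head_cons, Matrix.tail_cons,
              Fin.lt_def] <;> omega
  · -- 132 shape : π i < π k < π j
    have hne_jk : π j ≠ π k := fun e => (ne_of_lt hjk) (π.injective e)
    have hkj : (π k).val < (π j).val := by
      rcases lt_or_gt_of_ne hne_jk with h | h
      · exact absurd h hc
      · exact h
    rcases Nat.lt_trichotomy (π z).val (π i).val with hz1 | hz1 | hz1
    · refine A1 (pat_contains π _ z i j k hzi hij hjk ?_)
      intro a b
      fin_cases a <;> fin_cases b <;>
        simp only [e0, e1, e2, e3, Matrix.cons_val_zero, Matrix.cons_val_one,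
          Matrix.cons_val_two, Matrix.cons_val_three, Matrix.head_cons, Matrix.tail_cons,
          Fin.lt_def] <;> omega
    · exact hd_zi (π.injective (Fin.ext hz1))
    · rcases Nat.lt_trichotomy (π z).val (π k).val with hz2 | hz2 | hz2
      · refine A3 (pat_contains π _ z i j k hzi hij hjk ?_)
        intro a b
        fin_cases a <;> fin_cases b <;>
          simp only [e0, e1, e2, e3, Matrix.cons_val_zero, Matrix.cons_val_one,
            Matrix.cons_val_two, Matrix.cons_val_three, Matrix.head_cons, Matrix.tail_cons,
            Fin.lt_def] <;> omega
      · exact hd_zk (π.injective (Fin.ext hz2))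
      · rcases Nat.lt_trichotomy (π z).val (π j).val with hz3 | hz3 | hz3
        · refine A5 (pat_contains π _ z i j k hzi hij hjk ?_)
          intro a b
          fin_cases a <;> fin_cases b <;>
            simp only [e0, e1, e2, e3, Matrix.cons_val_zero, Matrix.cons_val_one,
              Matrix.cons_val_two, Matrix.cons_val_three, Matrix.head_cons, Matrix.tail_cons,
              Fin.lt_def] <;> omega
        · exact hd_zj (π.injective (Fin.ext hz3))
        · refine A7 (pat_contains π _ z i j k hzi hij hjk ?_)
          intro a b
          fin_cases a <;> fin_cases b <;>
            simp only [e0, e1, e2, e3, Matrix.cons_val_zero, Matrix.cons_val_one,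
              Matrix.cons_val_two, Matrix.cons_val_three, Matrix.head_cons, Matrix.tail_cons,
              Fin.lt_def] <;> omega

lemma no132 (π : Equiv.Perm (Fin n)) (hC : Cond π) (p : Fin 4 → ℕ)
    (h1 : p 1 < p 3) (h2 : p 3 < p 2) : PermAvoids π p := by
  rintro ⟨f, hm, hp⟩
  have h01 : f 0 < f 1 := hm (by decide)
  have h12 : f 1 < f 2 := hm (by decide)
  have h23 : f 2 < f 3 := hm (by decide)
  have hzv : 0 < (f 1).val := Nat.lt_of_le_of_lt (Nat.zero_le (f 0).val) h01
  have ha := (hp 1 3).mp h1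
  have hb := (hp 3 2).mp h2
  have hh := hC (f 1) (f 2) (f 3) hzv h12 h23 ha
  exact absurd hh.2 (asymm hb)

lemma no213 (π : Equiv.Perm (Fin n)) (hC : Cond π) (p : Fin 4 → ℕ)
    (h1 : p 2 < p 1) (h2 : p 1 < p 3) : PermAvoids π p := by
  rintro ⟨f, hm, hp⟩
  have h01 : f 0 < f 1 := hm (by decide)
  have h12 : f 1 < f 2 := hm (by decide)
  have h23 : f 2 < f 3 := hm (by decide)
  have hzv : 0 < (f 1).val := Nat.lt_of_le_of_lt (Nat.zero_le (f 0).val) h01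
  have ha := (hp 2 1).mp h1
  have hb := (hp 1 3).mp h2
  have hh := hC (f 1) (f 2) (f 3) hzv h12 h23 hb
  exact absurd hh.1 (asymm ha)

lemma avoids_of_cond (π : Equiv.Perm (Fin n)) (hC : Cond π) :
    PermAvoids π ![1, 2, 4, 3] ∧ PermAvoids π ![1, 3, 2, 4] ∧
    PermAvoids π ![2, 1, 4, 3] ∧ PermAvoids π ![2, 3, 1, 4] ∧
    PermAvoids π ![3, 1, 4, 2] ∧ PermAvoids π ![3, 2, 1, 4] ∧
    PermAvoids π ![4, 1, 3, 2] ∧ PermAvoids π ![4, 2, 1, 3] :=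
  ⟨no132 π hC _ (by decide) (by decide), no213 π hC _ (by decide) (by decide),
   no132 π hC _ (by decide) (by decide), no213 π hC _ (by decide) (by decide),
   no132 π hC _ (by decide) (by decide), no213 π hC _ (by decide) (by decide),
   no132 π hC _ (by decide) (by decide), no213 π hC _ (by decide) (by decide)⟩

end Patterns

end AvEight

theorem av_eight_patterns_card (n : ℕ) (hn : 2 ≤ n) :
    Nat.card {π : Equiv.Perm (Fin n) //
        PermAvoids π ![1, 2, 4, 3] ∧ PermAvoids π ![1, 3, 2, 4] ∧
        PermAvoids π ![2, 1, 4, 3] ∧ PermAvoids π ![2, 3, 1, 4] ∧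
        PermAvoids π ![3, 1, 4, 2] ∧ PermAvoids π ![3, 2, 1, 4] ∧
        PermAvoids π ![4, 1, 3, 2] ∧ PermAvoids π ![4, 2, 1, 3]} =
      n * 2 ^ (n - 2) := by
  classical
  have hiff : ∀ π : Equiv.Perm (Fin n),
      (PermAvoids π ![1, 2, 4, 3] ∧ PermAvoids π ![1, 3, 2, 4] ∧
        PermAvoids π ![2, 1, 4, 3] ∧ PermAvoids π ![2, 3, 1, 4] ∧
        PermAvoids π ![3, 1, 4, 2] ∧ PermAvoids π ![3, 2, 1, 4] ∧
        PermAvoids π ![4, 1, 3, 2] ∧ PermAvoids π ![4, 2, 1, 3]) ↔ AvEight.Cond π := by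
    intro π
    constructor
    · rintro ⟨A1, A2, A3, A4, A5, A6, A7, A8⟩
      exact AvEight.cond_of_avoids π A1 A2 A3 A4 A5 A6 A7 A8
    · intro h
      exact AvEight.avoids_of_cond π h
  rw [Nat.card_congr (Equiv.subtypeEquivRight hiff)]
  have hbij : Function.Bijective (fun x : {π : Equiv.Perm (Fin n) // AvEight.Cond π} =>
      ((x.1 ⟨0, by omega⟩, AvEight.desc hn x.1) : Fin n × (Fin (n - 2) → Bool))) := by
    constructor
    · rintro ⟨π, hπ⟩ ⟨σ, hσ⟩ h
      simp only [Prod.mk.injEq] at h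
      exact Subtype.ext (AvEight.unique_perm hn π σ hπ hσ h.1 h.2)
    · rintro ⟨v, d⟩
      refine ⟨⟨AvEight.build v d, AvEight.cond_build v d⟩, ?_⟩
      simp only [Prod.mk.injEq]
      exact ⟨AvEight.build_zero v d (by omega), AvEight.desc_build hn v d⟩
  rw [Nat.card_congr (Equiv.ofBijective _ hbij)]
  rw [Nat.card_eq_fintype_card, Fintype.card_prod, Fintype.card_fin, Fintype.card_fun,
    Fintype.card_fin, Fintype.card_bool]
end
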